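/- arXiv:2402.17857 — 2 statements merged into one kernel-verified Lean document; each statement's English description precedes it below -/
import Mathlib

section
/- Let q = 3 and let L, L' be two stars K_{1,2} sharing their two leaves (so L ∪ L' ≅ K_{2,2}, with centers x and x' and common leaves v₀ and v_{k+1}). For every ε > 0 there exists a K_3-transformer T from L to L' such that m₂(T, V(L) ∪ V(L')) ≤ 3 + ε. Concretely, for any even integer k ≥ 1/ε, the graph T on new vertices v₁,…,v_k with edge set { v_{i−1}v_i : i ∈ [k+1] } ∪ { x v_i, x' v_i : i ∈ [k] } is such a transformer. -/
/-!
The triangles `x_c v₀ v₁, x_{1-c} v₁ v₂, x_c v₂ v₃, …, x_c v_k v_{k+1}` alternate their apex between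
the two centres; as `k` is even the first and the last have apex `x_c`, so together they decompose
`T ∪ L_c`: every path edge lies in one of them, and `x_d v_i` lies in whichever of the two triangles
at `v_i` has apex `x_d`.

For the densities, charge each edge of a subgraph `H ⊆ T` to a vertex of `H` outside the roots,
together with a label: `x_d v_i` goes to `(v_i, x_d)`, a path edge to its endpoint away from a
fixed path vertex `v_j` not in `H` (or away from `v_{k+1}`, sacrificing the edge `v_k v_{k+1}`).
The charging is injective, so with `t = |V(H) ∖ R|` we get `e(H) ≤ 3t` when `H` misses an internal
path vertex and `e(H) ≤ 3t + 1 ≤ 3t + tε` otherwise, since then `t ≥ k ≥ 1/ε`. When `H` contains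
at most one root, fewer labels are available, and in all cases `e(H) + 5 ≤ 3 v(H)`, whence
`m₂(T) ≤ 3`.
-/

/-- The edges spanned by a clique with vertex set `S`. -/
def cliqueEdges {V : Type} (S : Finset V) : Set (Sym2 V) :=
  {f | ¬f.IsDiag ∧ ∀ v ∈ f, v ∈ S}

/-- A `K_q`-decomposition of a graph `G`. -/
def IsKqDecomp {V : Type} (q : ℕ) (G : SimpleGraph V) (𝒟 : Set (Finset V)) : Prop :=
  (∀ S ∈ 𝒟, G.IsNClique q S) ∧
  ∀ e ∈ G.edgeSet, ∃! S, S ∈ 𝒟 ∧ e ∈ cliqueEdges S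

/-- The maximum rooted density `m(H,R)`. -/
noncomputable def rootedDensity {V : Type} (H : SimpleGraph V) (R : Set V) : ℝ :=
  sSup {x : ℝ | ∃ H' : H.Subgraph, (H'.verts \ R).Nonempty ∧
    x = (H'.edgeSet.ncard : ℝ) / ((H'.verts \ R).ncard : ℝ)}

/-- The maximum 2-density `m₂(H)`. -/
noncomputable def density2 {V : Type} (H : SimpleGraph V) : ℝ :=
  sSup {x : ℝ | ∃ H' : H.Subgraph, 3 ≤ H'.verts.ncard ∧
    x = ((H'.edgeSet.ncard : ℝ) - 1) / ((H'.verts.ncard : ℝ) - 2)}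

/-- The maximum rooted 2-density `m₂(H,R)`. -/
noncomputable def rootedDensity2 {V : Type} (H : SimpleGraph V) (R : Set V) : ℝ :=
  max (rootedDensity H R) (density2 H)

/-- Vertex type for the transformer: the path vertices `v₀,…,v_{k+1}`
(as `Fin (k+2)`) together with the two star centers `x = inr 0` and
`x' = inr 1`. -/
abbrev TW (k : ℕ) := Fin (k + 2) ⊕ Fin 2

/-- The transformer graph `T`: the path `v₀ v₁ ⋯ v_{k+1}` together with all
edges from `x` and `x'` to the internal path vertices `v₁,…,v_k`. -/
def transformerT (k : ℕ) : SimpleGraph (TW k) :=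
  SimpleGraph.fromRel (fun a b =>
    (∃ i : Fin (k + 1), a = Sum.inl i.castSucc ∧ b = Sum.inl i.succ) ∨
    (∃ (i : Fin (k + 2)) (c : Fin 2),
      0 < i.val ∧ i.val < k + 1 ∧ a = Sum.inr c ∧ b = Sum.inl i))

/-- The star `K_{1,2}` with center `inr c` and leaves `v₀` and `v_{k+1}`. -/
def starK12 (k : ℕ) (c : Fin 2) : SimpleGraph (TW k) :=
  SimpleGraph.fromRel (fun a b =>
    a = Sum.inr c ∧ (b = Sum.inl 0 ∨ b = Sum.inl (Fin.last (k + 1))))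

/-- The root set `V(L) ∪ V(L')`. -/
def transformerRoots (k : ℕ) : Set (TW k) :=
  {Sum.inl 0, Sum.inl (Fin.last (k + 1)), Sum.inr 0, Sum.inr 1}

theorem isKqDecomp_image {V ι : Type} {q : ℕ} {G : SimpleGraph V} {f : ι → Finset V}
    {s : Set ι} (hclique : ∀ j ∈ s, G.IsNClique q (f j))
    (hcover : ∀ e ∈ G.edgeSet, ∃ j ∈ s, ∀ v ∈ e, v ∈ f j)
    (hunique : ∀ j ∈ s, ∀ j' ∈ s, ∀ a b, a ≠ b →
      a ∈ f j → b ∈ f j → a ∈ f j' → b ∈ f j' → j = j') :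
    IsKqDecomp q G (f '' s) := by
  refine ⟨Set.forall_mem_image.mpr hclique, fun e he => ?_⟩
  obtain ⟨j, hj, hej⟩ := hcover e he
  refine ⟨f j, ⟨Set.mem_image_of_mem f hj, G.not_isDiag_of_mem_edgeSet he, hej⟩, ?_⟩
  rintro _ ⟨⟨j', hj', rfl⟩, hdiag, hej'⟩
  induction e with | _ a b => ?_
  rw [Sym2.mk_isDiag_iff] at hdiag
  rw [hunique j' hj' j hj a b hdiag (hej' a (by simp)) (hej' b (by simp)) (hej a (by simp))
    (hej b (by simp))]

lemma ncard_le_mul_card_of_subset_image {α β γ : Type*} {E : Set γ} {U : Set α} {C : Finset β}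
    (f : α × β → γ) (hU : U.Finite) (hE : E ⊆ f '' (U ×ˢ ↑C)) : E.ncard ≤ U.ncard * C.card :=
  calc E.ncard ≤ (f '' (U ×ˢ ↑C)).ncard := Set.ncard_le_ncard hE ((hU.prod C.finite_toSet).image f)
    _ ≤ (U ×ˢ (↑C : Set β)).ncard := Set.ncard_image_le (hU.prod C.finite_toSet)
    _ = U.ncard * C.card := by rw [Set.ncard_prod, Set.ncard_coe_finset]

/-- The path vertex `v_n`; indices beyond `k + 1` are clamped to `v_{k+1}`. -/
def pathVtx (k n : ℕ) : TW k := Sum.inl ⟨min n (k + 1), by omega⟩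

section TransformerGraph

variable {k : ℕ}

@[simp]
lemma pathVtx_val (i : Fin (k + 2)) : pathVtx k i = Sum.inl i := by
  simp only [pathVtx, Sum.inl.injEq, Fin.ext_iff]
  omega

lemma pathVtx_inj {n n' : ℕ} (hn : n ≤ k + 1) (hn' : n' ≤ k + 1) :
    pathVtx k n = pathVtx k n' ↔ n = n' := by
  simp only [pathVtx, Sum.inl.injEq, Fin.ext_iff]
  omega

@[simp]
lemma pathVtx_ne_inr {n : ℕ} {d : Fin 2} : pathVtx k n ≠ Sum.inr d := Sum.inl_ne_inr

@[simp]
lemma inr_ne_pathVtx {n : ℕ} {d : Fin 2} : Sum.inr d ≠ pathVtx k n := Sum.inr_ne_inl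

lemma inr_mem_transformerRoots (d : Fin 2) : (Sum.inr d : TW k) ∈ transformerRoots k := by
  fin_cases d <;> simp [transformerRoots]

lemma pathVtx_mem_transformerRoots_iff {n : ℕ} (hn : n ≤ k + 1) :
    pathVtx k n ∈ transformerRoots k ↔ n = 0 ∨ n = k + 1 := by
  simp only [transformerRoots, pathVtx, Set.mem_insert_iff, Set.mem_singleton_iff, reduceCtorEq,
    or_false, Sum.inl.injEq, Fin.ext_iff]
  grind

lemma pathVtx_notMem_transformerRoots {n : ℕ} (hn : 1 ≤ n) (hnk : n ≤ k) :
    pathVtx k n ∉ transformerRoots k :=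
  (pathVtx_mem_transformerRoots_iff (by omega)).not.mpr (by omega)

lemma transformerT_adj_pathVtx_succ {i : ℕ} (hi : i ≤ k) :
    (transformerT k).Adj (pathVtx k i) (pathVtx k (i + 1)) := by
  rw [transformerT, SimpleGraph.fromRel_adj]
  refine ⟨(pathVtx_inj (by omega) (by omega)).not.mpr (by omega),
    Or.inl (Or.inl ⟨⟨i, by omega⟩, ?_, ?_⟩)⟩ <;>
    simp only [pathVtx, Fin.castSucc_mk, Fin.succ_mk, Sum.inl.injEq, Fin.ext_iff] <;> omega

lemma transformerT_adj_inr_pathVtx (d : Fin 2) {i : ℕ} (hi : 1 ≤ i) (hik : i ≤ k) :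
    (transformerT k).Adj (Sum.inr d) (pathVtx k i) := by
  simp only [transformerT, SimpleGraph.fromRel_adj, pathVtx]
  refine ⟨by simp, Or.inl (Or.inr ⟨⟨i, by omega⟩, d, hi, Nat.lt_succ_of_le hik, rfl, ?_⟩)⟩
  simp only [Sum.inl.injEq, Fin.ext_iff]
  omega

lemma transformerT_edge_cases {e : Sym2 (TW k)} (he : e ∈ (transformerT k).edgeSet) :
    (∃ i ≤ k, e = s(pathVtx k i, pathVtx k (i + 1))) ∨
      ∃ (d : Fin 2) (i : ℕ), 1 ≤ i ∧ i ≤ k ∧ e = s(Sum.inr d, pathVtx k i) := by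
  induction e with | _ a b => ?_
  simp only [SimpleGraph.mem_edgeSet, transformerT, SimpleGraph.fromRel_adj] at he
  obtain ⟨-, (⟨i, rfl, rfl⟩ | ⟨i, d, hi, hik, rfl, rfl⟩) |
    (⟨i, rfl, rfl⟩ | ⟨i, d, hi, hik, rfl, rfl⟩)⟩ := he
  · exact Or.inl ⟨i, by omega, by simp [← pathVtx_val]⟩
  · exact Or.inr ⟨d, i, hi, by omega, by simp⟩
  · exact Or.inl ⟨i, by omega, by simp [← pathVtx_val, Sym2.eq_swap]⟩
  · exact Or.inr ⟨d, i, hi, by omega, by simp [Sym2.eq_swap]⟩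

lemma starK12_edge_cases {c : Fin 2} {e : Sym2 (TW k)} (he : e ∈ (starK12 k c).edgeSet) :
    e = s(Sum.inr c, pathVtx k 0) ∨ e = s(Sum.inr c, pathVtx k (k + 1)) := by
  induction e with | _ a b => ?_
  simp only [SimpleGraph.mem_edgeSet, starK12, SimpleGraph.fromRel_adj] at he
  obtain ⟨-, ⟨rfl, rfl | rfl⟩ | ⟨rfl, rfl | rfl⟩⟩ := he <;> simp [← pathVtx_val, Sym2.eq_swap]

lemma transformerRoots_not_adj (hk : 1 ≤ k) :
    ∀ u ∈ transformerRoots k, ∀ v ∈ transformerRoots k, ¬(transformerT k).Adj u v := by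
  intro u hu v hv huv
  rcases transformerT_edge_cases (e := s(u, v)) huv with ⟨i, hi, he⟩ | ⟨d, i, hi, hik, he⟩ <;>
    rcases Sym2.eq_iff.mp he with ⟨rfl, rfl⟩ | ⟨rfl, rfl⟩
  all_goals
    simp only [pathVtx_mem_transformerRoots_iff (by omega : i ≤ k + 1),
      pathVtx_mem_transformerRoots_iff (by omega : i + 1 ≤ k + 1)] at hu hv
    omega

end TransformerGraph

def triangleCentre (c : Fin 2) (j : ℕ) : Fin 2 := if j % 2 = 0 then c else 1 - c

lemma triangleCentre_eq_iff {c : Fin 2} {j j' : ℕ} :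
    triangleCentre c j = triangleCentre c j' ↔ j % 2 = j' % 2 := by
  unfold triangleCentre
  split_ifs <;> omega

lemma eq_triangleCentre_or_succ (c d : Fin 2) (j : ℕ) :
    d = triangleCentre c j ∨ d = triangleCentre c (j + 1) := by
  unfold triangleCentre
  split_ifs <;> omega

lemma triangleCentre_of_even {c : Fin 2} {j : ℕ} (hj : Even j) : triangleCentre c j = c :=
  if_pos (Nat.even_iff.mp hj)

def triangle (k : ℕ) (c : Fin 2) (j : ℕ) : Finset (TW k) :=
  {Sum.inr (triangleCentre c j), pathVtx k j, pathVtx k (j + 1)}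

section Decomposition

variable {k : ℕ} {c : Fin 2}

@[simp]
lemma inr_mem_triangle {j : ℕ} {d : Fin 2} :
    Sum.inr d ∈ triangle k c j ↔ d = triangleCentre c j := by
  simp [triangle]

lemma pathVtx_mem_triangle {j n : ℕ} (hn : n ≤ k + 1) (hj : j ≤ k) :
    pathVtx k n ∈ triangle k c j ↔ n = j ∨ n = j + 1 := by
  simp [triangle, pathVtx_inj hn (by omega : j ≤ k + 1), pathVtx_inj hn (by omega : j + 1 ≤ k + 1)]

lemma inl_mem_triangle {j : ℕ} {i : Fin (k + 2)} (hj : j ≤ k) :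
    Sum.inl i ∈ triangle k c j ↔ (i : ℕ) = j ∨ (i : ℕ) = j + 1 := by
  rw [← pathVtx_val, pathVtx_mem_triangle i.is_le hj]

lemma eq_of_pair_mem_triangle {j j' : ℕ} (hj : j ≤ k) (hj' : j' ≤ k) {a b : TW k} (hab : a ≠ b)
    (ha : a ∈ triangle k c j) (hb : b ∈ triangle k c j)
    (ha' : a ∈ triangle k c j') (hb' : b ∈ triangle k c j') : j = j' := by
  have := @triangleCentre_eq_iff c j j'
  rcases a with a | a <;> rcases b with b | b <;>
    simp only [inl_mem_triangle hj, inl_mem_triangle hj', inr_mem_triangle] at ha hb ha' hb'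
  · simp only [ne_eq, Sum.inl.injEq, Fin.ext_iff] at hab
    omega
  · rw [hb] at hb'
    omega
  · rw [ha] at ha'
    omega
  · exact absurd (congrArg Sum.inr (ha.trans hb.symm)) hab

lemma starK12_adj_inr_pathVtx {n : ℕ} (hn : n = 0 ∨ n = k + 1) :
    (starK12 k c).Adj (Sum.inr c) (pathVtx k n) := by
  simp only [starK12, pathVtx, SimpleGraph.fromRel_adj, Sum.inl.injEq, Fin.ext_iff]
  grind

lemma adj_triangleCentre_pathVtx (hk : Even k) {j n : ℕ} (hj : j ≤ k) (hn : n = j ∨ n = j + 1) :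
    (transformerT k ⊔ starK12 k c).Adj (Sum.inr (triangleCentre c j)) (pathVtx k n) := by
  by_cases hint : 1 ≤ n ∧ n ≤ k
  · exact Or.inl (transformerT_adj_inr_pathVtx _ hint.1 hint.2)
  · have hj : j = 0 ∨ j = k := by omega
    rw [triangleCentre_of_even (by rcases hj with rfl | rfl <;> simp [hk])]
    exact Or.inr (starK12_adj_inr_pathVtx (by omega))

lemma isNClique_triangle (hk : Even k) {j : ℕ} (hj : j ≤ k) :
    (transformerT k ⊔ starK12 k c).IsNClique 3 (triangle k c j) :=
  SimpleGraph.is3Clique_iff.mpr ⟨_, _, _, adj_triangleCentre_pathVtx hk hj (Or.inl rfl),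
    adj_triangleCentre_pathVtx hk hj (Or.inr rfl), Or.inl (transformerT_adj_pathVtx_succ hj), rfl⟩

lemma exists_triangle_of_mem_edgeSet (hk : Even k) {e : Sym2 (TW k)}
    (he : e ∈ (transformerT k ⊔ starK12 k c).edgeSet) :
    ∃ j ∈ Set.Iic k, ∀ v ∈ e, v ∈ triangle k c j := by
  rw [SimpleGraph.edgeSet_sup] at he
  rcases he with he | he
  · rcases transformerT_edge_cases he with ⟨i, hi, rfl⟩ | ⟨d, i, hi, hik, rfl⟩
    · refine ⟨i, hi, Sym2.ball.mpr ⟨?_, ?_⟩⟩ <;> rw [pathVtx_mem_triangle (by omega) hi] <;> simp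
    · rcases eq_triangleCentre_or_succ c d (i - 1) with hd | hd
      · refine ⟨i - 1, Set.mem_Iic.mpr (by omega), Sym2.ball.mpr ⟨by simp [hd], ?_⟩⟩
        rw [pathVtx_mem_triangle (by omega) (by omega)]
        omega
      · rw [Nat.sub_add_cancel hi] at hd
        refine ⟨i, hik, Sym2.ball.mpr ⟨by simp [hd], ?_⟩⟩
        rw [pathVtx_mem_triangle (by omega) hik]
        omega
  · rcases starK12_edge_cases he with rfl | rfl
    · refine ⟨0, by simp, Sym2.ball.mpr ⟨by simp [triangleCentre_of_even], ?_⟩⟩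
      rw [pathVtx_mem_triangle (by omega) (by omega)]
      omega
    · refine ⟨k, Set.mem_Iic.mpr le_rfl, Sym2.ball.mpr ⟨by simp [triangleCentre_of_even hk], ?_⟩⟩
      rw [pathVtx_mem_triangle le_rfl le_rfl]
      omega

theorem isKqDecomp_triangle (hk : Even k) (c : Fin 2) :
    IsKqDecomp 3 (transformerT k ⊔ starK12 k c) (triangle k c '' Set.Iic k) :=
  isKqDecomp_image (fun _ hj => isNClique_triangle hk hj)
    (fun _ he => exists_triangle_of_mem_edgeSet hk he)
    (fun _ hj _ hj' _ _ hab ha hb ha' hb' => eq_of_pair_mem_triangle hj hj' hab ha hb ha' hb')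

end Decomposition

/-- Every edge of `transformerT k` that avoids `v_j` is charged to a non-root vertex and a label:
`some d` for its edge to the centre `x_d`, `none` for its path edge on the side away from `v_j`. -/
def chargedEdge (k j : ℕ) : TW k × Option (Fin 2) → Sym2 (TW k)
  | (u, some d) => s(Sum.inr d, u)
  | (Sum.inl i, none) =>
    if (i : ℕ) < j then s(pathVtx k (i - 1), Sum.inl i) else s(Sum.inl i, pathVtx k (i + 1))
  | (Sum.inr d, none) => s(Sum.inr d, Sum.inr d)

section Density

variable {k : ℕ}

lemma chargedEdge_pathVtx_none (j : ℕ) {n : ℕ} (hn : n ≤ k + 1) :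
    chargedEdge k j (pathVtx k n, none) = if n < j then s(pathVtx k (n - 1), pathVtx k n)
      else s(pathVtx k n, pathVtx k (n + 1)) := by
  have : pathVtx k n = Sum.inl ⟨n, by omega⟩ := by simp [pathVtx, Nat.min_eq_left hn]
  rw [this, chargedEdge]

theorem ncard_le_mul_card_of_charging (H' : (transformerT k).Subgraph) {j : ℕ} (hj : 1 ≤ j)
    (hjk : j ≤ k + 1) {E : Set (Sym2 (TW k))} (hE : E ⊆ H'.edgeSet)
    {C : Finset (Option (Fin 2))} (hnone : none ∈ C)
    (hsome : ∀ d, Sum.inr d ∈ H'.verts → some d ∈ C)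
    (hpath : ∀ i ≤ k, s(pathVtx k i, pathVtx k (i + 1)) ∈ E → i ≠ j ∧ i + 1 ≠ j) :
    E.ncard ≤ (H'.verts \ transformerRoots k).ncard * C.card := by
  refine ncard_le_mul_card_of_subset_image (chargedEdge k j) (Set.toFinite _) fun e he => ?_
  have heH := hE he
  rcases transformerT_edge_cases (H'.edgeSet_subset heH) with ⟨i, hi, rfl⟩ | ⟨d, i, hi, hik, rfl⟩
  · obtain ⟨hij, hij'⟩ := hpath i hi he
    by_cases hlt : i + 1 < j
    · refine ⟨(pathVtx k (i + 1), none), ⟨⟨heH.snd_mem, pathVtx_notMem_transformerRoots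
        (by omega) (by omega)⟩, hnone⟩, ?_⟩
      rw [chargedEdge_pathVtx_none j (by omega), if_pos hlt, Nat.add_sub_cancel]
    · refine ⟨(pathVtx k i, none), ⟨⟨heH.fst_mem, pathVtx_notMem_transformerRoots
        (by omega) (by omega)⟩, hnone⟩, ?_⟩
      rw [chargedEdge_pathVtx_none j (by omega), if_neg (by omega)]
  · exact ⟨(pathVtx k i, some d), ⟨⟨heH.snd_mem, pathVtx_notMem_transformerRoots hi hik⟩,
      hsome d heH.fst_mem⟩, rfl⟩

theorem ncard_edgeSet_le_of_notMem (H' : (transformerT k).Subgraph) {j : ℕ} (hj : 1 ≤ j)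
    (hjk : j ≤ k + 1) (hvj : pathVtx k j ∉ H'.verts) {C : Finset (Option (Fin 2))}
    (hnone : none ∈ C) (hsome : ∀ d, Sum.inr d ∈ H'.verts → some d ∈ C) :
    H'.edgeSet.ncard ≤ (H'.verts \ transformerRoots k).ncard * C.card :=
  ncard_le_mul_card_of_charging H' hj hjk subset_rfl hnone hsome fun _ _ he =>
    ⟨fun h => hvj (h ▸ he.fst_mem), fun h => hvj (h ▸ he.snd_mem)⟩

theorem ncard_edgeSet_le_add_one (H' : (transformerT k).Subgraph) {C : Finset (Option (Fin 2))}
    (hnone : none ∈ C) (hsome : ∀ d, Sum.inr d ∈ H'.verts → some d ∈ C) :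
    H'.edgeSet.ncard ≤ (H'.verts \ transformerRoots k).ncard * C.card + 1 := by
  let lastEdge := s(pathVtx k k, pathVtx k (k + 1))
  have hlast := Set.ncard_le_ncard_sdiff_add_ncard H'.edgeSet {lastEdge}
  have hrest := ncard_le_mul_card_of_charging H' (j := k + 1) (E := H'.edgeSet \ {lastEdge})
    (by omega) le_rfl Set.sdiff_subset hnone hsome
    fun i _ he => ⟨by omega, fun h => he.2 (by rw [show i = k by omega]; rfl)⟩
  rw [Set.ncard_singleton] at hlast
  omega

lemma le_ncard_verts_sdiff_transformerRoots (H' : (transformerT k).Subgraph)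
    (hall : ∀ n, 1 ≤ n → n ≤ k → pathVtx k n ∈ H'.verts) :
    k ≤ (H'.verts \ transformerRoots k).ncard := by
  have h := Set.ncard_le_ncard_of_injOn (s := Set.Icc 1 k) (t := H'.verts \ transformerRoots k)
    (pathVtx k) (fun n hn => ⟨hall n hn.1 hn.2, pathVtx_notMem_transformerRoots hn.1 hn.2⟩)
    (fun n hn n' hn' h => (pathVtx_inj (by grind) (by grind)).mp h)
  simpa using h

theorem rootedDensity_transformerT_le {ε : ℝ} (hε : 0 < ε) (hk : 1 / ε ≤ (k : ℝ)) :
    rootedDensity (transformerT k) (transformerRoots k) ≤ 3 + ε := by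
  refine Real.sSup_le ?_ (by positivity)
  rintro _ ⟨H', hne, rfl⟩
  set t := (H'.verts \ transformerRoots k).ncard
  have ht : (0 : ℝ) < t := by exact_mod_cast (Set.ncard_pos (Set.toFinite _)).mpr hne
  rw [div_le_iff₀ ht]
  by_cases hall : ∀ n, 1 ≤ n → n ≤ k → pathVtx k n ∈ H'.verts
  · have he : (H'.edgeSet.ncard : ℝ) ≤ t * 3 + 1 := by
      exact_mod_cast ncard_edgeSet_le_add_one H' (C := Finset.univ) (by simp) (by simp)
    have hkt : (k : ℝ) ≤ t := by exact_mod_cast le_ncard_verts_sdiff_transformerRoots H' hall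
    have hkε : 1 ≤ (k : ℝ) * ε := (div_le_iff₀ hε).mp hk
    nlinarith
  · push Not at hall
    obtain ⟨n, hn, hnk, hvn⟩ := hall
    have he : (H'.edgeSet.ncard : ℝ) ≤ t * 3 := by
      exact_mod_cast ncard_edgeSet_le_of_notMem H' hn (by omega) hvn (C := Finset.univ)
        (by simp) (by simp)
    nlinarith

theorem ncard_edgeSet_add_five_le (H' : (transformerT k).Subgraph) (hv : 3 ≤ H'.verts.ncard) :
    H'.edgeSet.ncard + 5 ≤ 3 * H'.verts.ncard := by
  set r := (H'.verts ∩ transformerRoots k).ncard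
  set t := (H'.verts \ transformerRoots k).ncard
  have hrt : r + t = H'.verts.ncard := Set.ncard_inter_add_ncard_sdiff_eq_ncard _ _
  by_cases hr : 2 ≤ r
  · have := ncard_edgeSet_le_add_one H' (C := Finset.univ) (by simp) (by simp)
    simp only [Finset.card_univ, Fintype.card_option, Fintype.card_fin] at this
    omega
  by_cases hcentre : ∃ d, Sum.inr d ∈ H'.verts
  · obtain ⟨d, hd⟩ := hcentre
    have hroot : ∀ u ∈ H'.verts ∩ transformerRoots k, u = Sum.inr d := fun u hu =>
      (Set.ncard_le_one_iff (Set.toFinite _)).mp (by omega) hu ⟨hd, inr_mem_transformerRoots d⟩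
    have hr1 : 0 < r := (Set.ncard_pos (Set.toFinite _)).mpr ⟨_, hd, inr_mem_transformerRoots d⟩
    have := ncard_edgeSet_le_of_notMem H' (j := k + 1) (C := {none, some d}) (by omega) le_rfl
      (fun h => pathVtx_ne_inr (hroot _ ⟨h, (pathVtx_mem_transformerRoots_iff le_rfl).mpr
        (Or.inr rfl)⟩)) (by simp)
      (fun d' hd' => by simp [Sum.inr_injective (hroot _ ⟨hd', inr_mem_transformerRoots d'⟩)])
    rw [Finset.card_pair (by simp)] at this
    omega
  · have := ncard_edgeSet_le_add_one H' (C := {none}) (by simp)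
      (fun d hd => absurd ⟨d, hd⟩ hcentre)
    rw [Finset.card_singleton] at this
    omega

theorem density2_transformerT_le : density2 (transformerT k) ≤ 3 := by
  refine Real.sSup_le ?_ (by norm_num)
  rintro _ ⟨H', hv, rfl⟩
  have hv' : (3 : ℝ) ≤ H'.verts.ncard := by exact_mod_cast hv
  have he : (H'.edgeSet.ncard : ℝ) + 5 ≤ 3 * H'.verts.ncard := by
    exact_mod_cast ncard_edgeSet_add_five_le H' hv
  rw [div_le_iff₀ (by linarith)]
  linarith

end Density

/-- For `q = 3`, stars `L = K_{1,2}` (center `x`) and `L' = K_{1,2}`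
(center `x'`) sharing their two leaves: for every `ε > 0` and every even
`k ≥ 1/ε`, the concrete graph `T` (path `v₀ ⋯ v_{k+1}` whose internal vertices
are joined to `x` and `x'`) is a `K₃`-transformer from `L` to `L'` with
`m₂(T, V(L) ∪ V(L')) ≤ 3 + ε`. -/
theorem star_transformer_triangle (ε : ℝ) (hε : 0 < ε) (k : ℕ)
    (hke : Even k) (hk : 1 / ε ≤ (k : ℝ)) :
    (∀ u ∈ transformerRoots k, ∀ v ∈ transformerRoots k,
      ¬(transformerT k).Adj u v) ∧
    (∃ 𝒟, IsKqDecomp 3 (transformerT k ⊔ starK12 k 0) 𝒟) ∧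
    (∃ 𝒟, IsKqDecomp 3 (transformerT k ⊔ starK12 k 1) 𝒟) ∧
    rootedDensity2 (transformerT k) (transformerRoots k) ≤ 3 + ε := by
  have hk1 : 1 ≤ k := by
    have : (0 : ℝ) < k := lt_of_lt_of_le (by positivity) hk
    exact_mod_cast this
  refine ⟨transformerRoots_not_adj hk1, ⟨_, isKqDecomp_triangle hke 0⟩,
    ⟨_, isKqDecomp_triangle hke 1⟩, max_le (rootedDensity_transformerT_le hε hk) ?_⟩
  linarith [density2_transformerT_le (k := k)]
end

section
/- Let q ≥ 3 be an integer and let L be a K_q-divisible graph. Let A be a K_q-absorber for L and let B be a K_q-absorber for ∇_q K_q. Let 𝒬₁ be a K_q-decomposition of A and 𝒬₂ a K_q-decomposition of L ∪ A. Then the graph A' := ∇_q L ∪ ∇_q A ∪ ⋃_{Q ∈ 𝒬₁ ∪ 𝒬₂} B_Q, where B_Q is a copy of B rooted at ∇_q Q (with all copies otherwise disjoint), is also a K_q-absorber for L. Furthermore, m₂(A', V(L)) ≤ max{ (q+1)/2, m₂(B, V(∇_q K_q)) }. -/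
/-- A graph is `K_q`-divisible. -/
def IsKqDivisible {V : Type} (q : ℕ) (G : SimpleGraph V) : Prop :=
  q.choose 2 ∣ G.edgeSet.ncard ∧ ∀ v : V, (q - 1) ∣ (G.neighborSet v).ncard

/-- `A` is a `K_q`-absorber for `L` with root set `VL`. -/
def IsAbsorber {V : Type} (q : ℕ) (L A : SimpleGraph V) (VL : Set V) : Prop :=
  L.support ⊆ VL ∧
  (∀ u ∈ VL, ∀ v ∈ VL, ¬A.Adj u v) ∧
  (∃ 𝒟, IsKqDecomp q A 𝒟) ∧
  (∃ 𝒟, IsKqDecomp q (L ⊔ A) 𝒟)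

/-- The vertex type of `∇_q X`: the original vertices together with `q-2` new
anti-edge vertices for each pair. -/
abbrev NewV (q : ℕ) (V : Type) := V ⊕ (Sym2 V × Fin (q - 2))

/-- `∇_q X`: the graph obtained from `X` by replacing every edge `f` of `X`
with `AntiEdge_q(f)` (all new vertices distinct). -/
def nabla (q : ℕ) {V : Type} (X : SimpleGraph V) : SimpleGraph (NewV q V) :=
  SimpleGraph.fromRel (fun a b =>
    (∃ (u : V) (f : Sym2 V) (i : Fin (q - 2)),
        a = Sum.inl u ∧ b = Sum.inr (f, i) ∧ f ∈ X.edgeSet ∧ u ∈ f) ∨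
    (∃ (f : Sym2 V) (i j : Fin (q - 2)),
        a = Sum.inr (f, i) ∧ b = Sum.inr (f, j) ∧ f ∈ X.edgeSet ∧ i ≠ j))

/-- The map from the vertices of `∇_q K_q` (on `Fin q`) to the vertices of
`∇_q Y` for a graph `Y` on `V`, induced by `σ : Fin q → V`. -/
def coreMap (q : ℕ) {V : Type} (σ : Fin q → V) : NewV q (Fin q) → NewV q V
  | Sum.inl i => Sum.inl (σ i)
  | Sum.inr (f, t) => Sum.inr (f.map σ, t)

open Classical in
/-- Gluing map for the copy `B_Q` of the absorber `B`: root vertices of `B`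
(those in the range of `ρ`) are identified with the corresponding vertices of
`∇_q Q`, all other vertices of `B_Q` are fresh vertices tagged by `Q`. -/
noncomputable def jmap (q : ℕ) {V W : Type} (ρ : NewV q (Fin q) → W)
    (σ : Fin q → V) (Q : Finset V) (w : W) : NewV q V ⊕ (Finset V × W) :=
  if h : ∃ x, ρ x = w then Sum.inl (coreMap q σ h.choose) else Sum.inr (Q, w)

/-- The glued graph `A' := ∇_q L ∪ ∇_q A ∪ ⋃_{Q ∈ 𝒬} B_Q`, where `B_Q` is a
copy of `B` rooted at `∇_q Q` (copies otherwise disjoint). -/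
noncomputable def gluedAbsorber (q : ℕ) {V W : Type} (L A : SimpleGraph V)
    (B : SimpleGraph W) (ρ : NewV q (Fin q) → W) (σ : Finset V → Fin q → V)
    (𝒬 : Set (Finset V)) : SimpleGraph (NewV q V ⊕ (Finset V × W)) :=
  SimpleGraph.fromRel (fun a b =>
    (∃ x y : NewV q V, (nabla q L ⊔ nabla q A).Adj x y ∧
      a = Sum.inl x ∧ b = Sum.inl y) ∨
    (∃ Q ∈ 𝒬, ∃ w w' : W, B.Adj w w' ∧
      a = jmap q ρ (σ Q) Q w ∧ b = jmap q ρ (σ Q) Q w'))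

/-!
`A'` is the edge-disjoint union of pieces with `K_q`-decompositions: the copy `B_Q` alone, or
`B_Q ∪ ∇_q Q`, which is a copy of `B ∪ ∇_q K_q`, for each clique `Q = σ_Q(K_q)`; and the clique
`AntiEdge_q(f) ∪ {f}` for an edge `f` of `L`. Splitting `∇_q (L ∪ A)` along `𝒬₂` decomposes `A'`;
keeping each edge of `L` with its anti-edge and splitting `∇_q A` along `𝒬₁` decomposes `L ∪ A'`.

For the densities, a subgraph `H` of `A'` is covered by its traces on `∇_q (L ∪ A)` and on the
copies `B_Q`, which share only root vertices. An anti-edge with `k` of its new vertices in `H`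
contributes at most `(q + 1) / 2 * k` edges, and the trace on `B_Q` at most `m(B, V(∇_q K_q))`
edges per non-root vertex; summing these bounds gives `m(A', V(L))`. For `m₂`, a single piece
containing an edge of `H` is bounded by its own `m₂`-type bound instead, which pays for the `- 2`.
-/

open Function

section Nabla

variable {V W : Type} {q : ℕ}

/-- The vertices of `AntiEdge_q(f)` in `∇_q X`: the ends of `f` and the `q - 2` new vertices
`Sum.inr (f, i)`. -/
def antiEdgeSet (q : ℕ) (f : Sym2 V) : Set (NewV q V) :=
  {x | Sum.elim (· ∈ f) (fun p => p.1 = f) x}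

@[simp] lemma inl_mem_antiEdgeSet {f : Sym2 V} {u : V} :
    (Sum.inl u : NewV q V) ∈ antiEdgeSet q f ↔ u ∈ f := Iff.rfl

@[simp] lemma inr_mem_antiEdgeSet {f g : Sym2 V} {i : Fin (q - 2)} :
    (Sum.inr (g, i) : NewV q V) ∈ antiEdgeSet q f ↔ g = f := Iff.rfl

lemma nabla_adj {X : SimpleGraph V} {a b : NewV q V} :
    (nabla q X).Adj a b ↔ a ≠ b ∧ (a.isRight ∨ b.isRight) ∧
      ∃ f ∈ X.edgeSet, a ∈ antiEdgeSet q f ∧ b ∈ antiEdgeSet q f := by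
  rw [nabla, SimpleGraph.fromRel_adj]
  rcases a with u | ⟨f, i⟩ <;> rcases b with v | ⟨g, j⟩ <;>
    grind [inl_mem_antiEdgeSet, inr_mem_antiEdgeSet]

lemma nabla_sup (X Y : SimpleGraph V) : nabla q (X ⊔ Y) = nabla q X ⊔ nabla q Y := by
  ext a b
  simp only [SimpleGraph.sup_adj, nabla_adj, SimpleGraph.edgeSet_sup, Set.mem_union]
  grind

lemma eq_of_mem_antiEdgeSet {f f' : Sym2 V} {x y : NewV q V} (hxy : x ≠ y)
    (hx : x ∈ antiEdgeSet q f) (hy : y ∈ antiEdgeSet q f) (hx' : x ∈ antiEdgeSet q f')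
    (hy' : y ∈ antiEdgeSet q f') : f = f' := by
  rcases x with u | ⟨g, i⟩
  · rcases y with v | ⟨g, j⟩
    · have huv : u ≠ v := fun h => hxy (congrArg _ h)
      exact ((Sym2.mem_and_mem_iff huv).mp ⟨hx, hy⟩).trans
        ((Sym2.mem_and_mem_iff huv).mp ⟨hx', hy'⟩).symm
    · exact hy.symm.trans hy'
  · exact hx.symm.trans hx'

lemma coreMap_injective {σ : Fin q → V} (hσ : Injective σ) : Injective (coreMap q σ) := by
  rintro (i | ⟨f, s⟩) (j | ⟨g, t⟩) h <;> simp only [coreMap, Sum.inl.injEq, Sum.inr.injEq,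
    Prod.mk.injEq, reduceCtorEq] at h ⊢
  · exact hσ h
  · exact ⟨Sym2.map.injective hσ h.1, h.2⟩

@[simp] lemma isRight_coreMap (σ : Fin q → V) (x : NewV q (Fin q)) :
    (coreMap q σ x).isRight = x.isRight := by
  rcases x with i | ⟨f, s⟩ <;> rfl

lemma coreMap_mem_antiEdgeSet {σ : Fin q → V} {g : Sym2 (Fin q)} {x : NewV q (Fin q)}
    (hx : x ∈ antiEdgeSet q g) : coreMap q σ x ∈ antiEdgeSet q (g.map σ) := by
  rcases x with i | ⟨f, s⟩
  · exact Sym2.mem_map.mpr ⟨i, hx, rfl⟩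
  · exact congrArg (Sym2.map σ) hx

lemma exists_coreMap_eq_of_mem_antiEdgeSet {σ : Fin q → V} {g : Sym2 (Fin q)}
    {y : NewV q V} (hy : y ∈ antiEdgeSet q (g.map σ)) :
    ∃ x ∈ antiEdgeSet q g, coreMap q σ x = y := by
  rcases y with u | ⟨f, s⟩
  · obtain ⟨i, hi, rfl⟩ := Sym2.mem_map.mp hy
    exact ⟨Sum.inl i, hi, rfl⟩
  · have hf : f = g.map σ := hy
    exact ⟨Sum.inr (g, s), rfl, by rw [hf]; rfl⟩

lemma nabla_adj_coreMap {σ : Fin q → V} (hσ : Injective σ) {G : SimpleGraph V}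
    (hG : ∀ i j, i ≠ j → G.Adj (σ i) (σ j)) {x y : NewV q (Fin q)}
    (h : (nabla q (⊤ : SimpleGraph (Fin q))).Adj x y) :
    (nabla q G).Adj (coreMap q σ x) (coreMap q σ y) := by
  obtain ⟨hxy, hr, g, hg, hx, hy⟩ := nabla_adj.mp h
  refine nabla_adj.mpr ⟨(coreMap_injective hσ).ne hxy, by simpa using hr, g.map σ, ?_,
    coreMap_mem_antiEdgeSet hx, coreMap_mem_antiEdgeSet hy⟩
  induction g with
  | _ i j => exact hG i j (by simpa using hg)

lemma exists_nabla_top_adj_of_mem_antiEdgeSet {σ : Fin q → V} {g : Sym2 (Fin q)}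
    (hg : ¬g.IsDiag) {a b : NewV q V} (hab : a ≠ b) (hr : a.isRight ∨ b.isRight)
    (ha : a ∈ antiEdgeSet q (g.map σ)) (hb : b ∈ antiEdgeSet q (g.map σ)) :
    ∃ x y, (nabla q (⊤ : SimpleGraph (Fin q))).Adj x y ∧
      coreMap q σ x = a ∧ coreMap q σ y = b := by
  obtain ⟨x, hx, rfl⟩ := exists_coreMap_eq_of_mem_antiEdgeSet ha
  obtain ⟨y, hy, rfl⟩ := exists_coreMap_eq_of_mem_antiEdgeSet hb
  refine ⟨x, y, nabla_adj.mpr ⟨?_, by simpa using hr, g, by simpa using hg, hx, hy⟩, rfl, rfl⟩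
  rintro rfl
  exact hab rfl

section Jmap

variable (ρ : NewV q (Fin q) ↪ W) (σ : Fin q → V) (Q : Finset V)

lemma jmap_apply_root (x : NewV q (Fin q)) :
    jmap q ρ σ Q (ρ x) = Sum.inl (coreMap q σ x) := by
  have h : ∃ y, ρ y = ρ x := ⟨x, rfl⟩
  rw [jmap, dif_pos h, ρ.injective h.choose_spec]

lemma jmap_of_notMem_range {w : W} (hw : w ∉ Set.range ρ) :
    jmap q ρ σ Q w = Sum.inr (Q, w) := by
  rw [jmap, dif_neg (by simpa using hw)]

variable {ρ σ Q}

lemma exists_of_jmap_eq_inl {w : W} {z : NewV q V} (h : jmap q ρ σ Q w = Sum.inl z) :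
    ∃ x, ρ x = w ∧ coreMap q σ x = z := by
  by_cases hw : w ∈ Set.range ρ
  · obtain ⟨x, rfl⟩ := hw
    rw [jmap_apply_root, Sum.inl.injEq] at h
    exact ⟨x, rfl, h⟩
  · simp [jmap_of_notMem_range ρ σ Q hw] at h

lemma eq_of_jmap_eq_inr {w : W} {p : Finset V × W} (h : jmap q ρ σ Q w = Sum.inr p) :
    p = (Q, w) := by
  by_cases hw : w ∈ Set.range ρ
  · obtain ⟨x, rfl⟩ := hw
    simp [jmap_apply_root] at h
  · rw [jmap_of_notMem_range ρ σ Q hw, Sum.inr.injEq] at h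
    exact h.symm

lemma jmap_injective (hσ : Injective σ) : Injective (jmap q ρ σ Q) := by
  intro w w' h
  by_cases hw : w ∈ Set.range ρ
  · obtain ⟨x, rfl⟩ := hw
    obtain ⟨x', rfl, hx'⟩ := exists_of_jmap_eq_inl (h.symm.trans (jmap_apply_root ρ σ Q x))
    rw [coreMap_injective hσ hx']
  · rw [jmap_of_notMem_range ρ σ Q hw] at h
    exact (Prod.mk.inj (eq_of_jmap_eq_inr h.symm)).2

end Jmap

end Nabla

section Decomposition

variable {V W : Type} {q : ℕ}

lemma mk_mem_cliqueEdges {S : Finset V} {a b : V} :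
    s(a, b) ∈ cliqueEdges S ↔ a ≠ b ∧ a ∈ S ∧ b ∈ S := by
  simp [cliqueEdges, Sym2.mem_iff]

lemma cliqueEdges_subset_edgeSet {G : SimpleGraph V} {S : Finset V}
    (h : G.IsClique (S : Set V)) : cliqueEdges S ⊆ G.edgeSet := by
  intro e he
  induction e with
  | _ a b =>
    obtain ⟨hab, ha, hb⟩ := mk_mem_cliqueEdges.mp he
    exact h ha hb hab

lemma map_mem_cliqueEdges_map_iff (f : V ↪ W) {S : Finset V} {e : Sym2 V} :
    e.map f ∈ cliqueEdges (S.map f) ↔ e ∈ cliqueEdges S := by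
  induction e with
  | _ a b => simp [mk_mem_cliqueEdges]

lemma ncard_cliqueEdges (S : Finset V) : (cliqueEdges S).ncard = S.card.choose 2 := by
  classical
  rw [← Sym2.card_image_offDiag, ← Set.ncard_coe_finset]
  congr 1
  ext e
  induction e with
  | _ a b =>
    simp only [mk_mem_cliqueEdges, Finset.coe_image, Set.mem_image, Finset.mem_coe,
      Finset.mem_offDiag, Prod.exists, uncurry_apply_pair, Sym2.eq_iff]
    constructor
    · rintro ⟨hab, ha, hb⟩
      exact ⟨a, b, ⟨ha, hb, hab⟩, Or.inl ⟨rfl, rfl⟩⟩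
    · rintro ⟨x, y, ⟨hx, hy, hxy⟩, ⟨rfl, rfl⟩ | ⟨rfl, rfl⟩⟩
      exacts [⟨hxy, hx, hy⟩, ⟨hxy.symm, hy, hx⟩]

def cliqueGraph (S : Finset V) : SimpleGraph V where
  Adj a b := a ≠ b ∧ a ∈ S ∧ b ∈ S
  symm.symm _ _ h := ⟨h.1.symm, h.2.2, h.2.1⟩
  loopless.irrefl _ h := h.1 rfl

lemma edgeSet_cliqueGraph (S : Finset V) : (cliqueGraph S).edgeSet = cliqueEdges S := by
  ext e
  induction e with
  | _ a b => exact mk_mem_cliqueEdges.symm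

lemma isKqDecomp_cliqueGraph {S : Finset V} (hS : S.card = q) :
    IsKqDecomp q (cliqueGraph S) {S} := by
  refine ⟨?_, fun e he => ⟨S, ⟨rfl, edgeSet_cliqueGraph S ▸ he⟩, fun _ h => h.1⟩⟩
  rintro _ rfl
  exact ⟨fun a ha b hb hab => ⟨hab, ha, hb⟩, hS⟩

lemma IsKqDecomp.map {G : SimpleGraph V} {𝒟 : Set (Finset V)} (h : IsKqDecomp q G 𝒟)
    (f : V ↪ W) : IsKqDecomp q (G.map f) (Finset.map f '' 𝒟) := by
  refine ⟨?_, fun e he => ?_⟩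
  · rintro _ ⟨S, hS, rfl⟩
    exact (h.1 S hS).map
  · rw [SimpleGraph.edgeSet_map] at he
    obtain ⟨e, he, rfl⟩ := he
    obtain ⟨S, ⟨hS, heS⟩, huniq⟩ := h.2 e he
    refine ⟨S.map f, ⟨⟨S, hS, rfl⟩, (map_mem_cliqueEdges_map_iff f).mpr heS⟩, ?_⟩
    rintro _ ⟨⟨S', hS', rfl⟩, heS'⟩
    rw [huniq S' ⟨hS', (map_mem_cliqueEdges_map_iff f).mp heS'⟩]

lemma IsKqDecomp.iSup {ι : Type*} {G : ι → SimpleGraph V} {𝒟 : ι → Set (Finset V)}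
    (h : ∀ i, IsKqDecomp q (G i) (𝒟 i))
    (hdisj : Pairwise fun i j => Disjoint (G i).edgeSet (G j).edgeSet) :
    IsKqDecomp q (⨆ i, G i) (⋃ i, 𝒟 i) := by
  refine ⟨fun S hS => ?_, fun e he => ?_⟩
  · obtain ⟨i, hS⟩ := Set.mem_iUnion.mp hS
    exact ((h i).1 S hS).mono (le_iSup G i)
  · obtain ⟨i, hi⟩ : ∃ i, e ∈ (G i).edgeSet := by simpa [SimpleGraph.edgeSet_iSup] using he
    obtain ⟨S, ⟨hS, heS⟩, huniq⟩ := (h i).2 e hi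
    refine ⟨S, ⟨Set.mem_iUnion.mpr ⟨i, hS⟩, heS⟩, fun S' ⟨hS', heS'⟩ => ?_⟩
    obtain ⟨j, hS'⟩ := Set.mem_iUnion.mp hS'
    obtain rfl : i = j := by
      by_contra hij
      exact Set.disjoint_left.mp (hdisj hij) hi
        (cliqueEdges_subset_edgeSet ((h j).1 S' hS').1 heS')
    exact huniq S' ⟨hS', heS'⟩

end Decomposition

section Glued

variable {V W : Type} {q : ℕ}

variable {L A : SimpleGraph V} {B : SimpleGraph W} {ρ : NewV q (Fin q) ↪ W}
  {σ : Finset V → Fin q → V} {𝒬 : Set (Finset V)}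

lemma gluedAbsorber_adj {a b : NewV q V ⊕ (Finset V × W)} :
    (gluedAbsorber q L A B ρ σ 𝒬).Adj a b ↔
      (∃ x y, (nabla q (L ⊔ A)).Adj x y ∧ a = Sum.inl x ∧ b = Sum.inl y) ∨
      (a ≠ b ∧ ∃ Q ∈ 𝒬, ∃ w w', B.Adj w w' ∧
        a = jmap q ρ (σ Q) Q w ∧ b = jmap q ρ (σ Q) Q w') := by
  rw [gluedAbsorber, SimpleGraph.fromRel_adj, nabla_sup]
  constructor
  · rintro ⟨hab, (h | ⟨Q, hQ, w, w', h, ha, hb⟩) | (⟨x, y, h, hb, ha⟩ | ⟨Q, hQ, w, w', h, hb, ha⟩)⟩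
    · exact Or.inl h
    · exact Or.inr ⟨hab, Q, hQ, w, w', h, ha, hb⟩
    · exact Or.inl ⟨y, x, h.symm, ha, hb⟩
    · exact Or.inr ⟨hab, Q, hQ, w', w, h.symm, ha, hb⟩
  · rintro (⟨x, y, h, rfl, rfl⟩ | ⟨hab, h⟩)
    · exact ⟨by simpa using h.ne, Or.inl (Or.inl ⟨x, y, h, rfl, rfl⟩)⟩
    · exact ⟨hab, Or.inl (Or.inr h)⟩

lemma gluedAbsorber_not_adj_inl_inl (hBind : ∀ u ∈ Set.range ρ, ∀ v ∈ Set.range ρ, ¬B.Adj u v)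
    (u v : V) : ¬(gluedAbsorber q L A B ρ σ 𝒬).Adj (Sum.inl (Sum.inl u)) (Sum.inl (Sum.inl v)) := by
  rw [gluedAbsorber_adj]
  rintro (⟨x, y, hxy, hx, hy⟩ | ⟨-, Q, -, w, w', hww, hw, hw'⟩)
  · cases Sum.inl.inj hx
    cases Sum.inl.inj hy
    simpa using (nabla_adj.mp hxy).2.1
  · obtain ⟨x, rfl, -⟩ := exists_of_jmap_eq_inl hw.symm
    obtain ⟨y, rfl, -⟩ := exists_of_jmap_eq_inl hw'.symm
    exact hBind _ ⟨x, rfl⟩ _ ⟨y, rfl⟩ hww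

lemma exists_inr_mem_of_adj (hBind : ∀ u ∈ Set.range ρ, ∀ v ∈ Set.range ρ, ¬B.Adj u v)
    (τ : Fin q → V) (Q : Finset V) {w w' : W} (hww : B.Adj w w') :
    ∃ w₀, (Sum.inr (Q, w₀) : NewV q V ⊕ (Finset V × W)) ∈
      s(jmap q ρ τ Q w, jmap q ρ τ Q w') := by
  by_cases hw : w ∈ Set.range ρ
  · have hw' : w' ∉ Set.range ρ := fun hw' => hBind w hw w' hw' hww
    exact ⟨w', by simp [jmap_of_notMem_range ρ τ Q hw']⟩
  · exact ⟨w, by simp [jmap_of_notMem_range ρ τ Q hw]⟩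

end Glued

section GluedDecomposition

variable {V W : Type} {q : ℕ}

/-- The vertex set of `AntiEdge_q(f) ∪ {f}`, a copy of `K_q`, inside the glued graph. -/
def antiEdgeClique (q : ℕ) (W : Type) [DecidableEq V] (f : Sym2 V) :
    Finset (NewV q V ⊕ (Finset V × W)) :=
  (f.toFinset.disjSum (Finset.univ.map (Embedding.sectR f (Fin (q - 2))))).map Embedding.inl

lemma coe_antiEdgeClique [DecidableEq V] (f : Sym2 V) :
    (antiEdgeClique q W f : Set (NewV q V ⊕ (Finset V × W))) = Sum.inl '' antiEdgeSet q f := by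
  ext ((u | ⟨g, i⟩) | p)
  all_goals simp [antiEdgeClique, eq_comm]

lemma card_antiEdgeClique [DecidableEq V] (hq : 2 ≤ q) {f : Sym2 V} (hf : ¬f.IsDiag) :
    (antiEdgeClique q W f).card = q := by
  simp only [antiEdgeClique, Finset.card_map, Finset.card_disjSum,
    Sym2.card_toFinset_of_not_isDiag f hf, Finset.card_univ, Fintype.card_fin]
  omega

open Classical in
/-- The copy `B_Q` of `B`, together with `∇_q Q` when `Q ∈ 𝒬a`. -/
noncomputable def copyPiece (B : SimpleGraph W) (ρ : NewV q (Fin q) ↪ W)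
    (σ : Finset V → Fin q → V) (𝒬a : Set (Finset V)) (Q : Finset V) :
    SimpleGraph (NewV q V ⊕ (Finset V × W)) :=
  (if Q ∈ 𝒬a then (nabla q (⊤ : SimpleGraph (Fin q))).map ρ ⊔ B else B).map (jmap q ρ (σ Q) Q)

variable {L A M GA : SimpleGraph V} {B : SimpleGraph W} {ρ : NewV q (Fin q) ↪ W}
  {σ : Finset V → Fin q → V} {𝒬 𝒬a : Set (Finset V)}

lemma exists_map_eq_of_mem_cliqueEdges {τ : Fin q → V} (hτ : Injective τ) {Q : Finset V}
    (hτQ : ∀ i, τ i ∈ Q) (hQ : Q.card = q) {f : Sym2 V} (hf : f ∈ cliqueEdges Q) :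
    ∃ g : Sym2 (Fin q), ¬g.IsDiag ∧ g.map τ = f := by
  have hsurj : Finset.univ.map ⟨τ, hτ⟩ = Q :=
    Finset.eq_of_subset_of_card_le (by simpa [Finset.subset_iff] using hτQ) (by simp [hQ])
  induction f with
  | _ u v =>
    obtain ⟨huv, hu, hv⟩ := mk_mem_cliqueEdges.mp hf
    obtain ⟨i, -, rfl⟩ := Finset.mem_map.mp (hsurj ▸ hu)
    obtain ⟨j, -, rfl⟩ := Finset.mem_map.mp (hsurj ▸ hv)
    exact ⟨s(i, j), by simpa using fun h => huv (congrArg τ h), rfl⟩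

lemma map_mem_cliqueEdges {τ : Fin q → V} (hτ : Injective τ) {Q : Finset V}
    (hτQ : ∀ i, τ i ∈ Q) {g : Sym2 (Fin q)} (hg : ¬g.IsDiag) : g.map τ ∈ cliqueEdges Q := by
  induction g with
  | _ i j => exact mk_mem_cliqueEdges.mpr ⟨hτ.ne (by simpa using hg), hτQ i, hτQ j⟩

lemma cliqueGraph_antiEdgeClique_le [DecidableEq V] (hM : M ≤ L ⊔ A) {f : Sym2 V}
    (hf : f ∈ M.edgeSet) :
    cliqueGraph (antiEdgeClique q W f) ≤
      M.map ((Embedding.inl : V ↪ NewV q V).trans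
        (Embedding.inl : NewV q V ↪ NewV q V ⊕ (Finset V × W))) ⊔
      gluedAbsorber q L A B ρ σ 𝒬 := by
  rintro _ _ ⟨hab, ha, hb⟩
  rw [← Finset.mem_coe, coe_antiEdgeClique] at ha hb
  obtain ⟨x, hx, rfl⟩ := ha
  obtain ⟨y, hy, rfl⟩ := hb
  have hxy : x ≠ y := fun h => hab (congrArg _ h)
  rcases x with u | x
  · rcases y with v | y
    · have huv : u ≠ v := fun h => hxy (congrArg _ h)
      rw [(Sym2.mem_and_mem_iff huv).mp ⟨hx, hy⟩] at hf
      exact Or.inl ((SimpleGraph.map_adj _ _ _ _).mpr ⟨u, v, hf, rfl, rfl⟩)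
    · exact Or.inr (gluedAbsorber_adj.mpr (Or.inl ⟨_, _, nabla_adj.mpr
        ⟨hxy, by simp, f, SimpleGraph.edgeSet_mono hM hf, hx, hy⟩, rfl, rfl⟩))
  · exact Or.inr (gluedAbsorber_adj.mpr (Or.inl ⟨_, _, nabla_adj.mpr
      ⟨hxy, by simp, f, SimpleGraph.edgeSet_mono hM hf, hx, hy⟩, rfl, rfl⟩))

lemma copyPiece_le {Q : Finset V} (hQ : Q ∈ 𝒬) (hσ : Injective (σ Q))
    (hcl : Q ∈ 𝒬a → ∀ i j, i ≠ j → (L ⊔ A).Adj (σ Q i) (σ Q j)) :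
    copyPiece B ρ σ 𝒬a Q ≤ gluedAbsorber q L A B ρ σ 𝒬 := by
  rintro a b ⟨hab, w, w', hww, rfl, rfl⟩
  rw [gluedAbsorber_adj]
  split_ifs at hww with hQa
  · rcases hww with ⟨-, x, y, hxy, rfl, rfl⟩ | hww
    · rw [jmap_apply_root, jmap_apply_root]
      exact Or.inl ⟨_, _, nabla_adj_coreMap hσ (hcl hQa) hxy, rfl, rfl⟩
    · exact Or.inr ⟨hab, Q, hQ, w, w', hww, rfl, rfl⟩
  · exact Or.inr ⟨hab, Q, hQ, w, w', hww, rfl, rfl⟩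

lemma copyPiece_adj_of_mem_antiEdgeSet {Q : Finset V} (hQa : Q ∈ 𝒬a) (hσ : Injective (σ Q))
    (hσQ : ∀ i, σ Q i ∈ Q) (hQ : Q.card = q) {f : Sym2 V} (hf : f ∈ cliqueEdges Q)
    {x y : NewV q V} (hxy : x ≠ y) (hr : x.isRight ∨ y.isRight) (hx : x ∈ antiEdgeSet q f)
    (hy : y ∈ antiEdgeSet q f) :
    (copyPiece B ρ σ 𝒬a Q).Adj (Sum.inl x) (Sum.inl y) := by
  obtain ⟨g, hg, rfl⟩ := exists_map_eq_of_mem_cliqueEdges hσ hσQ hQ hf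
  obtain ⟨x, y, h, rfl, rfl⟩ := exists_nabla_top_adj_of_mem_antiEdgeSet hg hxy hr hx hy
  simp only [copyPiece, if_pos hQa]
  exact ⟨by simpa using hxy, ρ x, ρ y, Or.inl ⟨ρ.injective.ne h.ne, x, y, h, rfl, rfl⟩,
    jmap_apply_root .., jmap_apply_root ..⟩

noncomputable def gluedPiece [DecidableEq V] (M : SimpleGraph V) (B : SimpleGraph W)
    (ρ : NewV q (Fin q) ↪ W) (σ : Finset V → Fin q → V) (𝒬 𝒬a : Set (Finset V)) :
    M.edgeSet ⊕ 𝒬 → SimpleGraph (NewV q V ⊕ (Finset V × W)) :=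
  Sum.elim (fun f => cliqueGraph (antiEdgeClique q W f.1)) (fun Q => copyPiece B ρ σ 𝒬a Q.1)

lemma map_sup_gluedAbsorber_le_iSup_gluedPiece [DecidableEq V]
    (hσ : ∀ Q ∈ 𝒬, Injective (σ Q) ∧ ∀ i, σ Q i ∈ Q) (h𝒬a : 𝒬a ⊆ 𝒬)
    (hGA : IsKqDecomp q GA 𝒬a) (hsplit : L ⊔ A ≤ M ⊔ GA) :
    M.map ((Embedding.inl : V ↪ NewV q V).trans
        (Embedding.inl : NewV q V ↪ NewV q V ⊕ (Finset V × W))) ⊔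
      gluedAbsorber q L A B ρ σ 𝒬 ≤ ⨆ i, gluedPiece M B ρ σ 𝒬 𝒬a i := by
  rintro a b (hM | hG)
  · obtain ⟨u, v, huv, rfl, rfl⟩ := (SimpleGraph.map_adj _ _ _ _).mp hM
    refine SimpleGraph.iSup_adj.mpr ⟨Sum.inl ⟨s(u, v), huv⟩, by simpa using huv.ne, ?_, ?_⟩ <;>
      rw [← Finset.mem_coe, coe_antiEdgeClique] <;> exact ⟨Sum.inl _, by simp, rfl⟩
  rcases gluedAbsorber_adj.mp hG with ⟨x, y, hxy, rfl, rfl⟩ | ⟨hab, Q, hQ, w, w', hww, rfl, rfl⟩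
  · obtain ⟨hne, hr, f, hf, hx, hy⟩ := nabla_adj.mp hxy
    have hf' : f ∈ M.edgeSet ∪ GA.edgeSet := by
      rw [← SimpleGraph.edgeSet_sup]
      exact SimpleGraph.edgeSet_mono hsplit hf
    rcases hf' with hfM | hfGA
    · refine SimpleGraph.iSup_adj.mpr ⟨Sum.inl ⟨f, hfM⟩, by simpa using hne, ?_, ?_⟩ <;>
        rw [← Finset.mem_coe, coe_antiEdgeClique] <;> exact ⟨_, by assumption, rfl⟩
    obtain ⟨Q, ⟨hQa, hfQ⟩, -⟩ := hGA.2 f hfGA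
    exact SimpleGraph.iSup_adj.mpr ⟨Sum.inr ⟨Q, h𝒬a hQa⟩, copyPiece_adj_of_mem_antiEdgeSet hQa
      (hσ Q (h𝒬a hQa)).1 (hσ Q (h𝒬a hQa)).2 (hGA.1 Q hQa).2 hfQ hne hr hx hy⟩
  · refine SimpleGraph.iSup_adj.mpr ⟨Sum.inr ⟨Q, hQ⟩, ?_⟩
    simp only [gluedPiece, Sum.elim_inr, copyPiece]
    split_ifs
    exacts [⟨hab, w, w', Or.inr hww, rfl, rfl⟩, ⟨hab, w, w', hww, rfl, rfl⟩]

lemma mem_of_mem_edgeSet_cliqueGraph_antiEdgeClique [DecidableEq V] {f : Sym2 V}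
    {e : Sym2 (NewV q V ⊕ (Finset V × W))}
    (he : e ∈ (cliqueGraph (antiEdgeClique q W f)).edgeSet) {x : NewV q V ⊕ (Finset V × W)}
    (hx : x ∈ e) : x ∈ Sum.inl '' antiEdgeSet q f := by
  rw [edgeSet_cliqueGraph] at he
  rw [← coe_antiEdgeClique]
  exact he.2 x hx

lemma copyPiece_edge_cases (hBind : ∀ u ∈ Set.range ρ, ∀ v ∈ Set.range ρ, ¬B.Adj u v)
    {Q : Finset V} (hσ : Injective (σ Q)) (hσQ : ∀ i, σ Q i ∈ Q)
    {e : Sym2 (NewV q V ⊕ (Finset V × W))} (he : e ∈ (copyPiece B ρ σ 𝒬a Q).edgeSet) :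
    (∀ x ∈ e, x ∈ Set.range (jmap q ρ (σ Q) Q)) ∧
      ((∃ w, Sum.inr (Q, w) ∈ e) ∨
        (Q ∈ 𝒬a ∧ ∃ f ∈ cliqueEdges Q, (∃ t, Sum.inl (Sum.inr (f, t)) ∈ e) ∧
          ∀ x ∈ e, x ∈ Sum.inl '' antiEdgeSet q f)) := by
  induction e with
  | _ a b =>
  obtain ⟨-, w, w', hww, rfl, rfl⟩ := he
  refine ⟨fun x hx => ?_, ?_⟩
  · rcases Sym2.mem_iff.mp hx with rfl | rfl <;> exact ⟨_, rfl⟩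
  split_ifs at hww with hQa
  · rcases hww with ⟨-, x, y, hxy, rfl, rfl⟩ | hww
    · obtain ⟨-, hr, g, hg, hx, hy⟩ := nabla_adj.mp hxy
      rw [jmap_apply_root, jmap_apply_root]
      refine Or.inr ⟨hQa, g.map (σ Q), map_mem_cliqueEdges hσ hσQ (by simpa using hg), ?_, ?_⟩
      · rcases hr with hr | hr
        · rcases x with _ | ⟨g', t⟩
          · simp at hr
          · exact ⟨t, by simp [coreMap, show g' = g from hx]⟩
        · rcases y with _ | ⟨g', t⟩
          · simp at hr
          · exact ⟨t, by simp [coreMap, show g' = g from hy]⟩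
      · intro z hz
        rcases Sym2.mem_iff.mp hz with rfl | rfl
        exacts [⟨_, coreMap_mem_antiEdgeSet hx, rfl⟩, ⟨_, coreMap_mem_antiEdgeSet hy, rfl⟩]
    · exact Or.inl (exists_inr_mem_of_adj hBind _ Q hww)
  · exact Or.inl (exists_inr_mem_of_adj hBind _ Q hww)

lemma disjoint_edgeSet_cliqueGraph_antiEdgeClique [DecidableEq V] {f f' : Sym2 V}
    (hff' : f ≠ f') :
    Disjoint (cliqueGraph (antiEdgeClique q W f)).edgeSet
      (cliqueGraph (antiEdgeClique q W f')).edgeSet := by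
  rw [Set.disjoint_left]
  intro e he he'
  induction e with
  | _ a b =>
  have hab : a ≠ b := ((SimpleGraph.mem_edgeSet _).mp he).ne
  obtain ⟨x, hx, rfl⟩ := mem_of_mem_edgeSet_cliqueGraph_antiEdgeClique he (Sym2.mem_mk_left _ _)
  obtain ⟨y, hy, rfl⟩ := mem_of_mem_edgeSet_cliqueGraph_antiEdgeClique he (Sym2.mem_mk_right _ _)
  have hx' := mem_of_mem_edgeSet_cliqueGraph_antiEdgeClique he' (Sym2.mem_mk_left _ _)
  have hy' := mem_of_mem_edgeSet_cliqueGraph_antiEdgeClique he' (Sym2.mem_mk_right _ _)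
  rw [Sum.inl_injective.mem_set_image] at hx' hy'
  exact hff' (eq_of_mem_antiEdgeSet (fun h => hab (congrArg _ h)) hx hy hx' hy')

lemma disjoint_edgeSet_cliqueGraph_copyPiece [DecidableEq V]
    (hBind : ∀ u ∈ Set.range ρ, ∀ v ∈ Set.range ρ, ¬B.Adj u v) (hGA : IsKqDecomp q GA 𝒬a)
    (hdisj : Disjoint M.edgeSet GA.edgeSet) {f : Sym2 V} (hf : f ∈ M.edgeSet) {Q : Finset V}
    (hσ : Injective (σ Q)) (hσQ : ∀ i, σ Q i ∈ Q) :
    Disjoint (cliqueGraph (antiEdgeClique q W f)).edgeSet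
      (copyPiece B ρ σ 𝒬a Q).edgeSet := by
  rw [Set.disjoint_left]
  intro e he he'
  obtain ⟨-, ⟨w, hw⟩ | ⟨hQa, f', hf'Q, ⟨t, ht⟩, -⟩⟩ := copyPiece_edge_cases hBind hσ hσQ he'
  · obtain ⟨x, -, hx⟩ := mem_of_mem_edgeSet_cliqueGraph_antiEdgeClique he hw
    simp at hx
  · obtain rfl : f' = f := by
      simpa using mem_of_mem_edgeSet_cliqueGraph_antiEdgeClique he ht
    exact Set.disjoint_left.mp hdisj hf (cliqueEdges_subset_edgeSet (hGA.1 Q hQa).1 hf'Q)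

lemma disjoint_edgeSet_copyPiece (hBind : ∀ u ∈ Set.range ρ, ∀ v ∈ Set.range ρ, ¬B.Adj u v)
    (hGA : IsKqDecomp q GA 𝒬a) {Q Q' : Finset V} (hQQ' : Q ≠ Q')
    (hσ : Injective (σ Q)) (hσQ : ∀ i, σ Q i ∈ Q)
    (hσ' : Injective (σ Q')) (hσQ' : ∀ i, σ Q' i ∈ Q') :
    Disjoint (copyPiece B ρ σ 𝒬a Q).edgeSet (copyPiece B ρ σ 𝒬a Q').edgeSet := by
  rw [Set.disjoint_left]
  intro e he he'
  obtain ⟨hran, h⟩ := copyPiece_edge_cases hBind hσ hσQ he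
  obtain ⟨hran', h'⟩ := copyPiece_edge_cases hBind hσ' hσQ' he'
  rcases h with ⟨w, hw⟩ | ⟨hQa, f, hfQ, ⟨t, ht⟩, -⟩
  · obtain ⟨w', hw'⟩ := hran' _ hw
    exact hQQ' (Prod.mk.inj (eq_of_jmap_eq_inr hw')).1
  rcases h' with ⟨w, hw⟩ | ⟨hQa', f', hf'Q', -, hall'⟩
  · obtain ⟨w', hw'⟩ := hran _ hw
    exact hQQ' (Prod.mk.inj (eq_of_jmap_eq_inr hw')).1.symm
  · obtain rfl : f = f' := by simpa using hall' _ ht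
    obtain ⟨_, -, huniq⟩ := hGA.2 f (cliqueEdges_subset_edgeSet (hGA.1 Q hQa).1 hfQ)
    exact hQQ' ((huniq Q ⟨hQa, hfQ⟩).trans (huniq Q' ⟨hQa', hf'Q'⟩).symm)

lemma pairwise_disjoint_edgeSet_gluedPiece [DecidableEq V]
    (hBind : ∀ u ∈ Set.range ρ, ∀ v ∈ Set.range ρ, ¬B.Adj u v)
    (hσ : ∀ Q ∈ 𝒬, Injective (σ Q) ∧ ∀ i, σ Q i ∈ Q) (hGA : IsKqDecomp q GA 𝒬a)
    (hdisj : Disjoint M.edgeSet GA.edgeSet) :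
    Pairwise fun i j => Disjoint (gluedPiece M B ρ σ 𝒬 𝒬a i).edgeSet
      (gluedPiece M B ρ σ 𝒬 𝒬a j).edgeSet := by
  rintro (⟨f, hf⟩ | ⟨Q, hQ⟩) (⟨f', hf'⟩ | ⟨Q', hQ'⟩) hne
  · exact disjoint_edgeSet_cliqueGraph_antiEdgeClique fun h => hne (by subst h; rfl)
  · exact disjoint_edgeSet_cliqueGraph_copyPiece hBind hGA hdisj hf (hσ Q' hQ').1 (hσ Q' hQ').2
  · exact (disjoint_edgeSet_cliqueGraph_copyPiece hBind hGA hdisj hf' (hσ Q hQ).1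
      (hσ Q hQ).2).symm
  · exact disjoint_edgeSet_copyPiece hBind hGA (fun h => hne (by subst h; rfl))
      (hσ Q hQ).1 (hσ Q hQ).2 (hσ Q' hQ').1 (hσ Q' hQ').2

lemma exists_isKqDecomp_gluedPiece [DecidableEq V] (hq : 2 ≤ q)
    (hB : ∃ 𝒟, IsKqDecomp q B 𝒟)
    (hNB : ∃ 𝒟, IsKqDecomp q ((nabla q (⊤ : SimpleGraph (Fin q))).map ρ ⊔ B) 𝒟)
    (hσ : ∀ Q ∈ 𝒬, Injective (σ Q)) (i : M.edgeSet ⊕ 𝒬) :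
    ∃ 𝒟, IsKqDecomp q (gluedPiece M B ρ σ 𝒬 𝒬a i) 𝒟 := by
  obtain ⟨𝒟B, hDB⟩ := hB
  obtain ⟨𝒟NB, hDNB⟩ := hNB
  rcases i with ⟨f, hf⟩ | ⟨Q, hQ⟩
  · exact ⟨_, isKqDecomp_cliqueGraph (card_antiEdgeClique hq (M.not_isDiag_of_mem_edgeSet hf))⟩
  let j : W ↪ NewV q V ⊕ (Finset V × W) := ⟨jmap q ρ (σ Q) Q, jmap_injective (hσ Q hQ)⟩
  by_cases hQa : Q ∈ 𝒬a
  · refine ⟨Finset.map j '' 𝒟NB, ?_⟩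
    simp only [gluedPiece, Sum.elim_inr, copyPiece, if_pos hQa]
    exact hDNB.map j
  · refine ⟨Finset.map j '' 𝒟B, ?_⟩
    simp only [gluedPiece, Sum.elim_inr, copyPiece, if_neg hQa]
    exact hDB.map j

lemma gluedPiece_le [DecidableEq V] (hσ : ∀ Q ∈ 𝒬, Injective (σ Q) ∧ ∀ i, σ Q i ∈ Q)
    (hGA : IsKqDecomp q GA 𝒬a) (hsplit : M ⊔ GA = L ⊔ A) (i : M.edgeSet ⊕ 𝒬) :
    gluedPiece M B ρ σ 𝒬 𝒬a i ≤
      M.map ((Embedding.inl : V ↪ NewV q V).trans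
        (Embedding.inl : NewV q V ↪ NewV q V ⊕ (Finset V × W))) ⊔
      gluedAbsorber q L A B ρ σ 𝒬 := by
  rcases i with ⟨f, hf⟩ | ⟨Q, hQ⟩
  · exact cliqueGraph_antiEdgeClique_le (hsplit ▸ le_sup_left) hf
  refine le_sup_of_le_right (copyPiece_le hQ (hσ Q hQ).1 fun hQa i j hij => ?_)
  exact (hsplit ▸ le_sup_right : GA ≤ L ⊔ A)
    ((hGA.1 Q hQa).1 ((hσ Q hQ).2 i) ((hσ Q hQ).2 j) ((hσ Q hQ).1.ne hij))

/-- `M ∪ A'` is decomposed by the cliques `AntiEdge_q(f) ∪ {f}`, `f ∈ M`, by copies of a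
decomposition of `∇_q K_q ∪ B` over the `Q ∈ 𝒬a`, and by copies of a decomposition of `B` over the
other `Q ∈ 𝒬`: `∇_q (L ∪ A)` is the edge-disjoint union of `∇_q M` and of the `∇_q Q`, `Q ∈ 𝒬a`. -/
theorem exists_isKqDecomp_map_sup_gluedAbsorber (hq : 2 ≤ q)
    (hB : IsAbsorber q ((nabla q (⊤ : SimpleGraph (Fin q))).map ρ) B (Set.range ρ))
    (hσ : ∀ Q ∈ 𝒬, Injective (σ Q) ∧ ∀ i, σ Q i ∈ Q) (h𝒬a : 𝒬a ⊆ 𝒬)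
    (hGA : IsKqDecomp q GA 𝒬a) (hsplit : M ⊔ GA = L ⊔ A)
    (hdisj : Disjoint M.edgeSet GA.edgeSet) :
    ∃ 𝒟, IsKqDecomp q
      (M.map ((Embedding.inl : V ↪ NewV q V).trans
          (Embedding.inl : NewV q V ↪ NewV q V ⊕ (Finset V × W))) ⊔
        gluedAbsorber q L A B ρ σ 𝒬) 𝒟 := by
  classical
  obtain ⟨-, hBind, hDB, hDNB⟩ := hB
  choose 𝒟 h𝒟 using exists_isKqDecomp_gluedPiece (M := M) (𝒬a := 𝒬a) hq hDB hDNB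
    fun Q hQ => (hσ Q hQ).1
  have hsplit_eq : M.map ((Embedding.inl : V ↪ NewV q V).trans
        (Embedding.inl : NewV q V ↪ NewV q V ⊕ (Finset V × W))) ⊔
      gluedAbsorber q L A B ρ σ 𝒬 = ⨆ i, gluedPiece M B ρ σ 𝒬 𝒬a i :=
    le_antisymm (map_sup_gluedAbsorber_le_iSup_gluedPiece hσ h𝒬a hGA hsplit.ge)
      (iSup_le (gluedPiece_le hσ hGA hsplit))
  exact ⟨_, hsplit_eq ▸
    IsKqDecomp.iSup h𝒟 (pairwise_disjoint_edgeSet_gluedPiece hBind hσ hGA hdisj)⟩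

end GluedDecomposition

section Density

variable {α : Type} {G : SimpleGraph α}

lemma SimpleGraph.Subgraph.ncard_edgeSet_le_choose_two [Fintype α] (H : G.Subgraph) :
    H.edgeSet.ncard ≤ H.verts.ncard.choose 2 := by
  classical
  rw [Set.ncard_eq_toFinset_card' H.verts, ← ncard_cliqueEdges]
  refine Set.ncard_le_ncard fun e he => ?_
  induction e with
  | _ a b =>
    have h : H.Adj a b := he
    exact mk_mem_cliqueEdges.mpr ⟨h.ne, by simpa using h.fst_mem, by simpa using h.snd_mem⟩

lemma two_le_ncard_verts_of_edgeSet_nonempty [Fintype α] {H : G.Subgraph}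
    (hH : H.edgeSet.Nonempty) :
    2 ≤ H.verts.ncard := by
  obtain ⟨e, he⟩ := hH
  induction e with
  | _ a b =>
    have h : H.Adj a b := he
    rw [← Set.ncard_pair h.ne]
    exact Set.ncard_le_ncard (Set.insert_subset h.fst_mem (Set.singleton_subset_iff.mpr h.snd_mem))

lemma ncard_edgeSet_le_card_sym2 [Fintype α] (H : G.Subgraph) :
    (H.edgeSet.ncard : ℝ) ≤ Nat.card (Sym2 α) := by
  exact_mod_cast Set.ncard_le_card _

lemma ncard_edgeSet_le_rootedDensity_mul [Fintype α] {R : Set α} (hR : ∀ u ∈ R, ∀ v ∈ R, ¬G.Adj u v)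
    (H : G.Subgraph) :
    (H.edgeSet.ncard : ℝ) ≤ rootedDensity G R * (H.verts \ R).ncard := by
  by_cases hne : (H.verts \ R).Nonempty
  · have hpos : (0 : ℝ) < (H.verts \ R).ncard := by
      exact_mod_cast (Set.ncard_pos (Set.toFinite _)).mpr hne
    rw [← div_le_iff₀ hpos]
    refine le_csSup ⟨Nat.card (Sym2 α), ?_⟩ ⟨H, hne, rfl⟩
    rintro _ ⟨H', hne', rfl⟩
    have h1 : (1 : ℝ) ≤ (H'.verts \ R).ncard := by
      exact_mod_cast (Set.ncard_pos (Set.toFinite _)).mpr hne'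
    exact div_le_of_le_mul₀ (by linarith) (by positivity)
      (by nlinarith [ncard_edgeSet_le_card_sym2 H'])
  · have hsub : H.verts ⊆ R := Set.sdiff_eq_empty.mp (Set.not_nonempty_iff_eq_empty.mp hne)
    have hempty : H.edgeSet = ∅ := by
      refine Set.eq_empty_iff_forall_notMem.mpr fun e he => ?_
      induction e with
      | _ a b =>
        have h : H.Adj a b := he
        exact hR a (hsub h.fst_mem) b (hsub h.snd_mem) (H.adj_sub h)
    simp [hempty, Set.not_nonempty_iff_eq_empty.mp hne]

lemma ncard_edgeSet_le_density2_mul [Fintype α] {H : G.Subgraph} (hH : H.edgeSet.Nonempty) :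
    (H.edgeSet.ncard : ℝ) ≤ density2 G * ((H.verts.ncard : ℝ) - 2) + 1 := by
  rcases (two_le_ncard_verts_of_edgeSet_nonempty hH).eq_or_lt with h2 | h3
  · have h1 : H.edgeSet.ncard ≤ 1 := by
      simpa [← h2] using H.ncard_edgeSet_le_choose_two
    have : (H.edgeSet.ncard : ℝ) ≤ 1 := by exact_mod_cast h1
    rw [← h2, Nat.cast_ofNat, sub_self, mul_zero, zero_add]
    exact this
  · have hpos : (0 : ℝ) < (H.verts.ncard : ℝ) - 2 := by
      have : (3 : ℝ) ≤ H.verts.ncard := by exact_mod_cast h3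
      linarith
    rw [← sub_le_iff_le_add, ← div_le_iff₀ hpos]
    refine le_csSup ⟨Nat.card (Sym2 α), ?_⟩ ⟨H, h3, rfl⟩
    rintro _ ⟨H', h3', rfl⟩
    have : (3 : ℝ) ≤ H'.verts.ncard := by exact_mod_cast h3'
    exact div_le_of_le_mul₀ (by linarith) (by positivity)
      (by nlinarith [ncard_edgeSet_le_card_sym2 H'])

lemma rootedDensity_le {R : Set α} {m : ℝ} (hm : 0 ≤ m)
    (h : ∀ H : G.Subgraph, (H.edgeSet.ncard : ℝ) ≤ m * (H.verts \ R).ncard) :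
    rootedDensity G R ≤ m := by
  refine Real.sSup_le ?_ hm
  rintro _ ⟨H, -, rfl⟩
  rcases (Nat.cast_nonneg _ : (0 : ℝ) ≤ (H.verts \ R).ncard).eq_or_lt with h0 | hpos
  · rw [← h0, div_zero]
    exact hm
  · rw [div_le_iff₀ hpos]
    exact h H

lemma density2_le {m : ℝ} (hm : 0 ≤ m)
    (h : ∀ H : G.Subgraph, 3 ≤ H.verts.ncard →
      (H.edgeSet.ncard : ℝ) ≤ m * ((H.verts.ncard : ℝ) - 2) + 1) :
    density2 G ≤ m := by
  refine Real.sSup_le ?_ hm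
  rintro _ ⟨H, h3, rfl⟩
  have : (3 : ℝ) ≤ H.verts.ncard := by exact_mod_cast h3
  rw [div_le_iff₀ (by linarith)]
  linarith [h H h3]

end Density

lemma sum_le_mul_sub_two_add_one {ι : Type*} (s : Finset ι) {e k : ι → ℝ} {a c : ℝ}
    (hlin : ∀ i ∈ s, e i ≤ a * k i)
    (hsharp : ∀ i ∈ s, 0 < e i → e i ≤ a * (k i + c - 2) + 1)
    (hpos : 0 < ∑ i ∈ s, e i) :
    ∑ i ∈ s, e i ≤ a * (∑ i ∈ s, k i + c - 2) + 1 := by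
  classical
  obtain ⟨j, hj, hej⟩ := Finset.exists_lt_of_sum_lt (f := fun _ => (0 : ℝ)) (by simpa using hpos)
  have hrest : ∑ i ∈ s.erase j, e i ≤ a * ∑ i ∈ s.erase j, k i := by
    rw [Finset.mul_sum]
    exact Finset.sum_le_sum fun i hi => hlin i (Finset.mem_of_mem_erase hi)
  rw [← Finset.add_sum_erase s e hj, ← Finset.add_sum_erase s k hj]
  linarith [hsharp j hj hej]

section AntiEdgeCount

variable {q c k : ℕ}

/-- `c * k + k.choose 2` is the number of edges of `AntiEdge_q(f)` spanned by `c` of its two old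
vertices and `k` of its new ones; this is where `m₂(AntiEdge_q(f), f) = (q + 1) / 2` comes from. -/
lemma antiEdge_count_le (hc : c ≤ 2) (hk : k ≤ q - 2) :
    (c * k + k.choose 2 : ℝ) ≤ (q + 1) / 2 * k := by
  rcases k.eq_zero_or_pos with rfl | hk0
  · simp
  have hkq : (k : ℝ) + 2 ≤ q := by exact_mod_cast (by omega : k + 2 ≤ q)
  have hc' : (c : ℝ) ≤ 2 := by exact_mod_cast hc
  have hk1 : (1 : ℝ) ≤ k := by exact_mod_cast hk0
  rw [Nat.cast_choose_two]
  nlinarith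

lemma antiEdge_count_le_of_pos (hc : c ≤ 2) (hk : k ≤ q - 2)
    (hpos : 0 < c * k + k.choose 2) :
    (c * k + k.choose 2 : ℝ) ≤ (q + 1) / 2 * (k + c - 2) + 1 := by
  have hk0 : 0 < k := by
    rcases k with _ | k
    · simp at hpos
    · omega
  have hkq : (k : ℝ) + 2 ≤ q := by exact_mod_cast (by omega : k + 2 ≤ q)
  have hk1 : (1 : ℝ) ≤ k := by exact_mod_cast hk0
  rw [Nat.cast_choose_two]
  interval_cases c
  · have hk2 : (2 : ℝ) ≤ k := by
      have : 2 ≤ k := by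
        by_contra h
        interval_cases k
        simp at hpos
      exact_mod_cast this
    push_cast
    nlinarith [mul_nonneg (sub_nonneg.mpr hk2) (sub_nonneg.mpr hkq)]
  · push_cast
    nlinarith [mul_nonneg (sub_nonneg.mpr hk1) (sub_nonneg.mpr hkq)]
  · push_cast
    nlinarith

end AntiEdgeCount

section NablaDensity

variable {V : Type} {q : ℕ} {X : SimpleGraph V}

open Classical in
noncomputable def coreEnds [Fintype V] (H : (nabla q X).Subgraph) (f : Sym2 V) : Finset V :=
  {u | u ∈ f ∧ Sum.inl u ∈ H.verts}

open Classical in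
noncomputable def gadgetIndices (H : (nabla q X).Subgraph) (f : Sym2 V) : Finset (Fin (q - 2)) :=
  {i | Sum.inr (f, i) ∈ H.verts}

lemma ncard_edgeSet_inter_antiEdge_le [Fintype V] (H : (nabla q X).Subgraph) (f : Sym2 V) :
    {e ∈ H.edgeSet | ∀ x ∈ e, x ∈ antiEdgeSet q f}.ncard ≤
      (coreEnds H f).card * (gadgetIndices H f).card + (gadgetIndices H f).card.choose 2 := by
  classical
  set C := coreEnds H f
  set K := gadgetIndices H f
  have hsub : {e ∈ H.edgeSet | ∀ x ∈ e, x ∈ antiEdgeSet q f} ⊆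
      (fun p : V × Fin (q - 2) => s(Sum.inl p.1, Sum.inr (f, p.2))) '' ↑(C ×ˢ K) ∪
        Sym2.map (fun i => Sum.inr (f, i)) '' cliqueEdges K := by
    rintro e ⟨he, hef⟩
    induction e with
    | _ a b =>
    have hab : H.Adj a b := he
    have hr := (nabla_adj.mp (H.adj_sub hab)).2.1
    have ha := hef a (Sym2.mem_mk_left a b)
    have hb := hef b (Sym2.mem_mk_right a b)
    rcases a with u | ⟨g, i⟩ <;> rcases b with v | ⟨g', j⟩
    · simp at hr
    · obtain rfl : g' = f := hb
      have hu : u ∈ g' := ha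
      exact Or.inl ⟨(u, j), by simp [C, K, coreEnds, gadgetIndices, hu, hab.fst_mem, hab.snd_mem],
        rfl⟩
    · obtain rfl : g = f := ha
      have hv : v ∈ g := hb
      exact Or.inl ⟨(v, i), by simp [C, K, coreEnds, gadgetIndices, hv, hab.fst_mem, hab.snd_mem],
        Sym2.eq_swap⟩
    · obtain rfl : g = f := ha
      obtain rfl : g' = g := hb
      refine Or.inr ⟨s(i, j), mk_mem_cliqueEdges.mpr ⟨fun h => hab.ne (by rw [h]), ?_, ?_⟩, rfl⟩
      · simpa [K, gadgetIndices] using hab.fst_mem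
      · simpa [K, gadgetIndices] using hab.snd_mem
  calc _ ≤ _ := Set.ncard_le_ncard hsub
    _ ≤ _ := Set.ncard_union_le _ _
    _ ≤ (↑(C ×ˢ K) : Set (V × Fin (q - 2))).ncard + (cliqueEdges K).ncard :=
        add_le_add (Set.ncard_image_le (Set.toFinite _)) (Set.ncard_image_le (Set.toFinite _))
    _ = _ := by rw [Set.ncard_coe_finset, Finset.card_product, ncard_cliqueEdges]

lemma ncard_edgeSet_nabla_le_sum [Fintype V] (H : (nabla q X).Subgraph) :
    H.edgeSet.ncard ≤ ∑ f, ((coreEnds H f).card * (gadgetIndices H f).card +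
      (gadgetIndices H f).card.choose 2) := by
  calc H.edgeSet.ncard
      ≤ (⋃ f ∈ Finset.univ, {e ∈ H.edgeSet | ∀ x ∈ e, x ∈ antiEdgeSet q f}).ncard := by
        refine Set.ncard_le_ncard fun e he => ?_
        induction e with
        | _ a b =>
          obtain ⟨-, -, f, -, ha, hb⟩ := nabla_adj.mp (H.adj_sub he)
          refine Set.mem_biUnion (Finset.mem_univ f) ⟨he, fun x hx => ?_⟩
          rcases Sym2.mem_iff.mp hx with rfl | rfl
          exacts [ha, hb]
    _ ≤ ∑ f, {e ∈ H.edgeSet | ∀ x ∈ e, x ∈ antiEdgeSet q f}.ncard :=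
        Finset.set_ncard_biUnion_le _ _
    _ ≤ _ := Finset.sum_le_sum fun f _ => ncard_edgeSet_inter_antiEdge_le H f

lemma card_coreEnds_le_two [Fintype V] (H : (nabla q X).Subgraph) (f : Sym2 V) :
    (coreEnds H f).card ≤ 2 := by
  classical
  calc (coreEnds H f).card ≤ f.toFinset.card :=
        Finset.card_le_card fun u hu => by simpa [coreEnds] using (Finset.mem_filter.mp hu).2.1
    _ ≤ 2 := by rw [Sym2.card_toFinset]; split_ifs <;> omega

lemma card_coreEnds_le [Fintype V] (H : (nabla q X).Subgraph) (f : Sym2 V) :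
    (coreEnds H f).card ≤ (H.verts ∩ Set.range Sum.inl).ncard := by
  rw [← Set.ncard_coe_finset]
  refine Set.ncard_le_ncard_of_injOn Sum.inl (fun u hu => ⟨?_, u, rfl⟩) Sum.inl_injective.injOn
  exact (by simpa [coreEnds] using hu : _ ∧ _).2

lemma card_gadgetIndices_le (H : (nabla q X).Subgraph) (f : Sym2 V) :
    (gadgetIndices H f).card ≤ q - 2 :=
  (Finset.card_le_univ _).trans (Fintype.card_fin _).le

lemma sum_card_gadgetIndices_le [Fintype V] (H : (nabla q X).Subgraph) :
    ∑ f, (gadgetIndices H f).card ≤ (H.verts \ Set.range Sum.inl).ncard := by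
  rw [← Finset.card_sigma, ← Set.ncard_coe_finset]
  refine Set.ncard_le_ncard_of_injOn (fun p => Sum.inr (p.1, p.2)) (fun p hp => ⟨?_, by simp⟩) ?_
  · simpa [gadgetIndices] using hp
  · rintro ⟨f, i⟩ - ⟨g, j⟩ - h
    simp only [Sum.inr.injEq, Prod.mk.injEq] at h
    obtain ⟨rfl, rfl⟩ := h
    rfl

theorem ncard_edgeSet_nabla_le [Fintype V] (H : (nabla q X).Subgraph) :
    (H.edgeSet.ncard : ℝ) ≤ (q + 1) / 2 * (H.verts \ Set.range Sum.inl).ncard := by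
  calc (H.edgeSet.ncard : ℝ)
      ≤ ∑ f, ((coreEnds H f).card * (gadgetIndices H f).card +
          (gadgetIndices H f).card.choose 2 : ℝ) := by exact_mod_cast ncard_edgeSet_nabla_le_sum H
    _ ≤ ∑ f, (q + 1) / 2 * ((gadgetIndices H f).card : ℝ) := Finset.sum_le_sum fun f _ =>
        antiEdge_count_le (card_coreEnds_le_two H f) (card_gadgetIndices_le H f)
    _ = (q + 1) / 2 * ∑ f, ((gadgetIndices H f).card : ℝ) := (Finset.mul_sum ..).symm
    _ ≤ _ := mul_le_mul_of_nonneg_left (by exact_mod_cast sum_card_gadgetIndices_le H)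
        (by positivity)

theorem ncard_edgeSet_nabla_le_of_nonempty [Fintype V] (H : (nabla q X).Subgraph)
    (hH : H.edgeSet.Nonempty) :
    (H.edgeSet.ncard : ℝ) ≤ (q + 1) / 2 * ((H.verts.ncard : ℝ) - 2) + 1 := by
  set c := (H.verts ∩ Set.range Sum.inl).ncard
  have hsum : (H.edgeSet.ncard : ℝ) ≤ ∑ f, ((coreEnds H f).card * (gadgetIndices H f).card +
      (gadgetIndices H f).card.choose 2 : ℝ) := by exact_mod_cast ncard_edgeSet_nabla_le_sum H
  have hpos : (0 : ℝ) < H.edgeSet.ncard := by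
    exact_mod_cast (Set.ncard_pos (Set.toFinite _)).mpr hH
  have hv : (H.verts.ncard : ℝ) = c + (H.verts \ Set.range Sum.inl).ncard := by
    exact_mod_cast (Set.ncard_inter_add_ncard_sdiff_eq_ncard H.verts (Set.range Sum.inl)).symm
  have hg : ∑ f, ((gadgetIndices H f).card : ℝ) ≤ (H.verts \ Set.range Sum.inl).ncard := by
    exact_mod_cast sum_card_gadgetIndices_le H
  calc (H.edgeSet.ncard : ℝ)
      ≤ _ := hsum
    _ ≤ (q + 1) / 2 * (∑ f, ((gadgetIndices H f).card : ℝ) + c - 2) + 1 := by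
        refine sum_le_mul_sub_two_add_one _
          (fun f _ => antiEdge_count_le (card_coreEnds_le_two H f) (card_gadgetIndices_le H f))
          (fun f _ hf => ?_) (hpos.trans_le hsum)
        refine (antiEdge_count_le_of_pos (card_coreEnds_le_two H f) (card_gadgetIndices_le H f)
          (by exact_mod_cast hf)).trans ?_
        have : ((coreEnds H f).card : ℝ) ≤ c := by exact_mod_cast card_coreEnds_le H f
        gcongr
    _ ≤ (q + 1) / 2 * ((H.verts.ncard : ℝ) - 2) + 1 := by
        rw [hv, add_comm (c : ℝ)]
        gcongr

end NablaDensity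

lemma ncard_add_sum_ncard_le {α κ β ι : Type*} [Finite α] [Finite κ] [Finite β] [Fintype ι]
    {S : Set (α ⊕ (κ × β))} {P : Set α} {N : ι → Set β} {tag : ι → κ} (htag : Injective tag)
    (hP : ∀ a ∈ P, Sum.inl a ∈ S) (hN : ∀ i, ∀ b ∈ N i, Sum.inr (tag i, b) ∈ S) :
    P.ncard + ∑ i, (N i).ncard ≤ S.ncard := by
  classical
  let T := (Set.toFinite P).toFinset.disjSum
    (Finset.univ.sigma fun i => (Set.toFinite (N i)).toFinset)
  calc P.ncard + ∑ i, (N i).ncard = (T : Set (α ⊕ (Σ _ : ι, β))).ncard := by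
        simp [T, Finset.card_disjSum, Finset.card_sigma, ← Set.ncard_eq_toFinset_card]
    _ ≤ S.ncard := by
        refine Set.ncard_le_ncard_of_injOn (Sum.elim Sum.inl fun p => Sum.inr (tag p.1, p.2))
          ?_ ?_
        · rintro (a | ⟨i, b⟩) h <;> simp only [T, Finset.mem_coe, Finset.inl_mem_disjSum,
            Finset.inr_mem_disjSum, Finset.mem_sigma, Set.Finite.mem_toFinset] at h
          exacts [hP a h, hN i b h.2]
        · rintro (a | ⟨i, b⟩) - (a' | ⟨i', b'⟩) - h <;> simp only [Sum.elim_inl, Sum.elim_inr,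
            Sum.inl.injEq, Sum.inr.injEq, Prod.mk.injEq, reduceCtorEq] at h
          · rw [h]
          · obtain ⟨hi, rfl⟩ := h
            obtain rfl := htag hi
            rfl

section GluedDensity

variable {V W : Type} {q : ℕ} {L A : SimpleGraph V} {B : SimpleGraph W}
  {ρ : NewV q (Fin q) ↪ W} {σ : Finset V → Fin q → V} {𝒬 : Set (Finset V)}

def inlHom : nabla q (L ⊔ A) →g gluedAbsorber q L A B ρ σ 𝒬 where
  toFun := Sum.inl
  map_rel' h := gluedAbsorber_adj.mpr (Or.inl ⟨_, _, h, rfl, rfl⟩)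

noncomputable def copyHom {Q : Finset V} (hQ : Q ∈ 𝒬) (hσ : Injective (σ Q)) :
    B →g gluedAbsorber q L A B ρ σ 𝒬 where
  toFun := jmap q ρ (σ Q) Q
  map_rel' h := gluedAbsorber_adj.mpr
    (Or.inr ⟨(jmap_injective hσ).ne h.ne, Q, hQ, _, _, h, rfl, rfl⟩)

lemma ncard_edgeSet_gluedAbsorber_le [Fintype V] [Fintype W] [Fintype 𝒬]
    (hσ : ∀ Q ∈ 𝒬, Injective (σ Q)) (H : (gluedAbsorber q L A B ρ σ 𝒬).Subgraph) :
    H.edgeSet.ncard ≤ (H.comap inlHom).edgeSet.ncard +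
      ∑ Q : 𝒬, (H.comap (copyHom Q.2 (hσ Q Q.2))).edgeSet.ncard := by
  calc H.edgeSet.ncard
      ≤ (Sym2.map Sum.inl '' (H.comap inlHom).edgeSet ∪
          ⋃ Q ∈ (Finset.univ : Finset 𝒬),
            Sym2.map (jmap q ρ (σ Q) Q) '' (H.comap (copyHom Q.2 (hσ Q Q.2))).edgeSet).ncard := by
        refine Set.ncard_le_ncard fun e he => ?_
        induction e with
        | _ a b =>
        have hab : H.Adj a b := he
        rcases gluedAbsorber_adj.mp (H.adj_sub hab) with
          ⟨x, y, hxy, rfl, rfl⟩ | ⟨-, Q, hQ, w, w', hww, rfl, rfl⟩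
        · exact Or.inl ⟨s(x, y), ⟨hxy, hab⟩, rfl⟩
        · refine Or.inr (Set.mem_biUnion (Finset.mem_univ ⟨Q, hQ⟩) ⟨s(w, w'), ⟨hww, ?_⟩, rfl⟩)
          change H.Adj (jmap q ρ (σ Q) Q w) (jmap q ρ (σ Q) Q w')
          exact hab
    _ ≤ _ := (Set.ncard_union_le _ _).trans (add_le_add (Set.ncard_image_le (Set.toFinite _))
        ((Finset.set_ncard_biUnion_le _ _).trans
          (Finset.sum_le_sum fun Q _ => Set.ncard_image_le (Set.toFinite _))))

lemma ncard_verts_comap_add_sum_le [Fintype V] [Fintype W] [Fintype 𝒬]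
    (hσ : ∀ Q ∈ 𝒬, Injective (σ Q)) (H : (gluedAbsorber q L A B ρ σ 𝒬).Subgraph) :
    (H.comap inlHom).verts.ncard +
      ∑ Q : 𝒬, ((H.comap (copyHom Q.2 (hσ Q Q.2))).verts \ Set.range ρ).ncard ≤
      H.verts.ncard :=
  ncard_add_sum_ncard_le Subtype.val_injective (fun _ hx => hx) fun Q w hw => by
    rw [← jmap_of_notMem_range ρ (σ Q) Q hw.2]
    exact hw.1

lemma ncard_verts_sdiff_comap_add_sum_le [Fintype V] [Fintype W] [Fintype 𝒬]
    (hσ : ∀ Q ∈ 𝒬, Injective (σ Q)) (H : (gluedAbsorber q L A B ρ σ 𝒬).Subgraph)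
    {R : Set (NewV q V ⊕ (Finset V × W))}
    (hR : R ⊆ Set.range fun v : V => Sum.inl (Sum.inl v)) :
    ((H.comap inlHom).verts \ Set.range Sum.inl).ncard +
      ∑ Q : 𝒬, ((H.comap (copyHom Q.2 (hσ Q Q.2))).verts \ Set.range ρ).ncard ≤
      (H.verts \ R).ncard := by
  refine ncard_add_sum_ncard_le Subtype.val_injective (fun x hx => ⟨hx.1, fun h => ?_⟩)
    fun Q w hw => ⟨?_, fun h => ?_⟩
  · obtain ⟨v, hv⟩ := hR h
    exact hx.2 ⟨v, Sum.inl_injective hv⟩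
  · rw [← jmap_of_notMem_range ρ (σ Q) Q hw.2]
    exact hw.1
  · obtain ⟨v, hv⟩ := hR h
    simp at hv

lemma ncard_verts_comap_copyHom_le [Fintype V] [Fintype W]
    (H : (gluedAbsorber q L A B ρ σ 𝒬).Subgraph) {Q : Finset V} (hQ : Q ∈ 𝒬)
    (hσQ : Injective (σ Q)) :
    (H.comap (copyHom hQ hσQ)).verts.ncard ≤
      ((H.comap (copyHom hQ hσQ)).verts \ Set.range ρ).ncard + (H.comap inlHom).verts.ncard := by
  set U := (H.comap (copyHom hQ hσQ)).verts
  rw [← Set.ncard_inter_add_ncard_sdiff_eq_ncard U (Set.range ρ), add_comm]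
  gcongr
  rw [← Set.ncard_image_of_injective (H.comap inlHom).verts
    (Sum.inl_injective (β := Finset V × W))]
  refine Set.ncard_le_ncard_of_injOn (jmap q ρ (σ Q) Q) ?_ (jmap_injective hσQ).injOn
  rintro _ ⟨hw, x, rfl⟩
  have hx : jmap q ρ (σ Q) Q (ρ x) ∈ H.verts := hw
  rw [jmap_apply_root] at hx ⊢
  exact ⟨_, hx, rfl⟩

lemma ncard_edgeSet_gluedAbsorber_le_mul_ncard_sdiff [Fintype V] [Fintype W]
    (hσ : ∀ Q ∈ 𝒬, Injective (σ Q)) (H : (gluedAbsorber q L A B ρ σ 𝒬).Subgraph)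
    (hBind : ∀ u ∈ Set.range ρ, ∀ v ∈ Set.range ρ, ¬B.Adj u v) {m : ℝ}
    (hqm : ((q : ℝ) + 1) / 2 ≤ m) (hBm : rootedDensity B (Set.range ρ) ≤ m)
    {R : Set (NewV q V ⊕ (Finset V × W))}
    (hR : R ⊆ Set.range fun v : V => Sum.inl (Sum.inl v)) :
    (H.edgeSet.ncard : ℝ) ≤ m * (H.verts \ R).ncard := by
  classical
  have hm : 0 ≤ m := le_trans (by positivity) hqm
  have he : (H.edgeSet.ncard : ℝ) ≤ (H.comap inlHom).edgeSet.ncard +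
      ∑ Q : 𝒬, ((H.comap (copyHom Q.2 (hσ Q Q.2))).edgeSet.ncard : ℝ) := by
    exact_mod_cast ncard_edgeSet_gluedAbsorber_le hσ H
  have hv : (((H.comap inlHom).verts \ Set.range Sum.inl).ncard : ℝ) +
      ∑ Q : 𝒬, (((H.comap (copyHom Q.2 (hσ Q Q.2))).verts \ Set.range ρ).ncard : ℝ) ≤
      (H.verts \ R).ncard := by
    exact_mod_cast ncard_verts_sdiff_comap_add_sum_le hσ H hR
  calc (H.edgeSet.ncard : ℝ)
      ≤ _ := he
    _ ≤ m * ((H.comap inlHom).verts \ Set.range Sum.inl).ncard +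
        ∑ Q : 𝒬, m * ((H.comap (copyHom Q.2 (hσ Q Q.2))).verts \ Set.range ρ).ncard := by
      gcongr with Q
      · exact (ncard_edgeSet_nabla_le _).trans (by gcongr)
      · exact (ncard_edgeSet_le_rootedDensity_mul hBind _).trans (by gcongr)
    _ ≤ m * (H.verts \ R).ncard := by
      rw [← Finset.mul_sum, ← mul_add]
      gcongr

lemma ncard_edgeSet_comap_copyHom_le [Fintype V] [Fintype W]
    (H : (gluedAbsorber q L A B ρ σ 𝒬).Subgraph) {Q : Finset V} (hQ : Q ∈ 𝒬)
    (hσQ : Injective (σ Q)) {m : ℝ} (hm : 0 ≤ m) (hB2m : density2 B ≤ m)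
    (hne : (H.comap (copyHom hQ hσQ)).edgeSet.Nonempty) :
    ((H.comap (copyHom hQ hσQ)).edgeSet.ncard : ℝ) ≤
      m * (((H.comap (copyHom hQ hσQ)).verts \ Set.range ρ).ncard +
        (H.comap inlHom).verts.ncard - 2) + 1 := by
  have h2 : (2 : ℝ) ≤ (H.comap (copyHom hQ hσQ)).verts.ncard := by
    exact_mod_cast two_le_ncard_verts_of_edgeSet_nonempty hne
  have hv : ((H.comap (copyHom hQ hσQ)).verts.ncard : ℝ) ≤
      ((H.comap (copyHom hQ hσQ)).verts \ Set.range ρ).ncard + (H.comap inlHom).verts.ncard := by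
    exact_mod_cast ncard_verts_comap_copyHom_le H hQ hσQ
  calc ((H.comap (copyHom hQ hσQ)).edgeSet.ncard : ℝ)
      ≤ density2 B * ((H.comap (copyHom hQ hσQ)).verts.ncard - 2) + 1 :=
        ncard_edgeSet_le_density2_mul hne
    _ ≤ _ := by gcongr

/-- The sharp bound is used on `∇_q (L ∪ A)` if it meets an edge of `H`, and otherwise on a single
copy `B_Q` meeting an edge of `H`; all other copies only contribute their rooted density. -/
lemma ncard_edgeSet_gluedAbsorber_le_of_three_le [Fintype V] [Fintype W]
    (hσ : ∀ Q ∈ 𝒬, Injective (σ Q)) (H : (gluedAbsorber q L A B ρ σ 𝒬).Subgraph)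
    (hBind : ∀ u ∈ Set.range ρ, ∀ v ∈ Set.range ρ, ¬B.Adj u v)
    {m : ℝ} (hqm : ((q : ℝ) + 1) / 2 ≤ m) (hBm : rootedDensity B (Set.range ρ) ≤ m)
    (hB2m : density2 B ≤ m) (h3 : 3 ≤ H.verts.ncard) :
    (H.edgeSet.ncard : ℝ) ≤ m * ((H.verts.ncard : ℝ) - 2) + 1 := by
  classical
  have hm : 0 ≤ m := le_trans (by positivity) hqm
  set H₀ := H.comap inlHom
  set HQ := fun Q : 𝒬 => H.comap (copyHom Q.2 (hσ Q Q.2))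
  set n : 𝒬 → ℕ := fun Q => ((HQ Q).verts \ Set.range ρ).ncard
  have he : (H.edgeSet.ncard : ℝ) ≤ H₀.edgeSet.ncard + ∑ Q, ((HQ Q).edgeSet.ncard : ℝ) := by
    exact_mod_cast ncard_edgeSet_gluedAbsorber_le hσ H
  have hv : H₀.verts.ncard + ∑ Q, n Q ≤ H.verts.ncard := ncard_verts_comap_add_sum_le hσ H
  have hv : (H₀.verts.ncard : ℝ) + ∑ Q, (n Q : ℝ) ≤ H.verts.ncard := by exact_mod_cast hv
  have hlin : ∀ Q, ((HQ Q).edgeSet.ncard : ℝ) ≤ m * (n Q : ℝ) := fun Q =>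
    (ncard_edgeSet_le_rootedDensity_mul hBind _).trans (by gcongr)
  by_cases h₀ : H₀.edgeSet.Nonempty
  · have hv₀ : (2 : ℝ) ≤ H₀.verts.ncard := by
      exact_mod_cast two_le_ncard_verts_of_edgeSet_nonempty h₀
    have hnabla := ncard_edgeSet_nabla_le_of_nonempty H₀ h₀
    calc (H.edgeSet.ncard : ℝ)
        ≤ _ := he
      _ ≤ (m * ((H₀.verts.ncard : ℝ) - 2) + 1) + ∑ Q, m * (n Q : ℝ) := by
        gcongr with Q
        · exact hnabla.trans (by gcongr)
        · exact hlin Q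
      _ ≤ m * ((H.verts.ncard : ℝ) - 2) + 1 := by
        rw [← Finset.mul_sum]
        nlinarith
  have he₀ : (H₀.edgeSet.ncard : ℝ) = 0 := by
    simp [Set.not_nonempty_iff_eq_empty.mp h₀]
  rcases (Finset.sum_nonneg fun Q _ => Nat.cast_nonneg _ :
    (0 : ℝ) ≤ ∑ Q, ((HQ Q).edgeSet.ncard : ℝ)).eq_or_lt with hzero | hpos
  · have : (3 : ℝ) ≤ H.verts.ncard := by exact_mod_cast h3
    nlinarith
  have hsharp : ∀ Q ∈ Finset.univ, (0 : ℝ) < (HQ Q).edgeSet.ncard →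
      ((HQ Q).edgeSet.ncard : ℝ) ≤ m * ((n Q : ℝ) + H₀.verts.ncard - 2) + 1 := fun Q _ hQ =>
    ncard_edgeSet_comap_copyHom_le H Q.2 (hσ Q Q.2) hm hB2m
      (Set.nonempty_of_ncard_ne_zero (by exact_mod_cast hQ.ne'))
  calc (H.edgeSet.ncard : ℝ)
      ≤ ∑ Q, ((HQ Q).edgeSet.ncard : ℝ) := by linarith
    _ ≤ m * (∑ Q, (n Q : ℝ) + H₀.verts.ncard - 2) + 1 :=
      sum_le_mul_sub_two_add_one _ (fun Q _ => hlin Q) hsharp hpos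
    _ ≤ m * ((H.verts.ncard : ℝ) - 2) + 1 := by
      gcongr
      linarith

theorem rootedDensity2_gluedAbsorber_le [Fintype V] [Fintype W]
    (hσ : ∀ Q ∈ 𝒬, Injective (σ Q)) (hBind : ∀ u ∈ Set.range ρ, ∀ v ∈ Set.range ρ, ¬B.Adj u v)
    {R : Set (NewV q V ⊕ (Finset V × W))}
    (hR : R ⊆ Set.range fun v : V => Sum.inl (Sum.inl v)) :
    rootedDensity2 (gluedAbsorber q L A B ρ σ 𝒬) R ≤
      max (((q : ℝ) + 1) / 2) (rootedDensity2 B (Set.range ρ)) := by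
  set m := max (((q : ℝ) + 1) / 2) (rootedDensity2 B (Set.range ρ))
  have hqm : ((q : ℝ) + 1) / 2 ≤ m := le_max_left _ _
  have hBm : rootedDensity B (Set.range ρ) ≤ m := (le_max_left _ _).trans (le_max_right _ _)
  have hB2m : density2 B ≤ m := (le_max_right _ _).trans (le_max_right _ _)
  have hm : 0 ≤ m := le_trans (by positivity) hqm
  exact max_le
    (rootedDensity_le hm fun H =>
      ncard_edgeSet_gluedAbsorber_le_mul_ncard_sdiff hσ H hBind hqm hBm hR)
    (density2_le hm fun H h3 =>
      ncard_edgeSet_gluedAbsorber_le_of_three_le hσ H hBind hqm hBm hB2m h3)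

end GluedDensity

lemma IsAbsorber.disjoint_edgeSet {V : Type} {q : ℕ} {L A : SimpleGraph V} {R : Set V}
    (h : IsAbsorber q L A R) : Disjoint L.edgeSet A.edgeSet := by
  refine Set.disjoint_left.mpr fun e heL heA => ?_
  induction e with
  | _ u v =>
    have huv : L.Adj u v := heL
    exact h.2.1 u (h.1 ⟨v, huv⟩) v (h.1 ⟨u, huv.symm⟩) heA

theorem nabla_construction_general {V W : Type} [Fintype V]
    [Fintype W] (q : ℕ) (hq : 3 ≤ q)
    (L A : SimpleGraph V) (VL : Set V)
    (hAabs : IsAbsorber q L A VL)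
    (𝒬₁ 𝒬₂ : Set (Finset V))
    (h1 : IsKqDecomp q A 𝒬₁) (h2 : IsKqDecomp q (L ⊔ A) 𝒬₂)
    (B : SimpleGraph W) (ρ : NewV q (Fin q) ↪ W)
    (hB : IsAbsorber q ((nabla q (⊤ : SimpleGraph (Fin q))).map ρ) B (Set.range ρ))
    (σ : Finset V → Fin q → V)
    (hσ : ∀ Q ∈ 𝒬₁ ∪ 𝒬₂, Function.Injective (σ Q) ∧ ∀ i : Fin q, σ Q i ∈ Q) :
    IsAbsorber q
      (L.map ((Function.Embedding.inl : V ↪ NewV q V).trans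
        (Function.Embedding.inl : NewV q V ↪ NewV q V ⊕ (Finset V × W))))
      (gluedAbsorber q L A B (⇑ρ) σ (𝒬₁ ∪ 𝒬₂))
      ((fun v : V => (Sum.inl (Sum.inl v) : NewV q V ⊕ (Finset V × W))) '' VL) ∧
    rootedDensity2 (gluedAbsorber q L A B (⇑ρ) σ (𝒬₁ ∪ 𝒬₂))
        ((fun v : V => (Sum.inl (Sum.inl v) : NewV q V ⊕ (Finset V × W))) '' VL)
      ≤ max (((q : ℝ) + 1) / 2) (rootedDensity2 B (Set.range ρ)) := by
  have hBind := hB.2.1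
  refine ⟨⟨?_, ?_, ?_, ?_⟩, rootedDensity2_gluedAbsorber_le (fun Q hQ => (hσ Q hQ).1) hBind
    (Set.image_subset_range _ _)⟩
  · rw [SimpleGraph.support_map]
    exact Set.image_mono hAabs.1
  · rintro _ ⟨u, -, rfl⟩ _ ⟨v, -, rfl⟩
    exact gluedAbsorber_not_adj_inl_inl hBind u v
  · -- `A'` alone: `∇_q (L ∪ A)` is split along the decomposition `𝒬₂` of `L ∪ A`
    obtain ⟨𝒟, h𝒟⟩ := exists_isKqDecomp_map_sup_gluedAbsorber (L := L) (A := A) (M := ⊥)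
      (by omega) hB hσ Set.subset_union_right h2 (bot_sup_eq _) (by simp)
    rw [show (⊥ : SimpleGraph V).map _ = ⊥ by ext; simp [SimpleGraph.map_adj'], bot_sup_eq] at h𝒟
    exact ⟨𝒟, h𝒟⟩
  · -- `L ∪ A'`: each edge of `L` keeps its anti-edge, `∇_q A` is split along `𝒬₁`
    exact exists_isKqDecomp_map_sup_gluedAbsorber (by omega) hB hσ Set.subset_union_left h1
      rfl hAabs.disjoint_edgeSet

/-- Let `L` be `K_q`-divisible, `A` a `K_q`-absorber for `L`, and `B` a
`K_q`-absorber for `∇_q K_q`.  Given `K_q`-decompositions `𝒬₁` of `A` and `𝒬₂`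
of `L ⊔ A`, the glued graph
`A' := ∇_q L ∪ ∇_q A ∪ ⋃_{Q ∈ 𝒬₁ ∪ 𝒬₂} B_Q` is again a `K_q`-absorber for
`L`, and moreover `m₂(A', V(L)) ≤ max{(q+1)/2, m₂(B, V(∇_q K_q))}`. -/
theorem nabla_construction {V W : Type} [Fintype V] [DecidableEq V]
    [Fintype W] [DecidableEq W] (q : ℕ) (hq : 3 ≤ q)
    (L A : SimpleGraph V) (VL : Set V)
    (hLdiv : IsKqDivisible q L)
    (hAabs : IsAbsorber q L A VL)
    (𝒬₁ 𝒬₂ : Set (Finset V))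
    (h1 : IsKqDecomp q A 𝒬₁) (h2 : IsKqDecomp q (L ⊔ A) 𝒬₂)
    (B : SimpleGraph W) (ρ : NewV q (Fin q) ↪ W)
    (hB : IsAbsorber q ((nabla q (⊤ : SimpleGraph (Fin q))).map ρ) B (Set.range ρ))
    (σ : Finset V → Fin q → V)
    (hσ : ∀ Q ∈ 𝒬₁ ∪ 𝒬₂, Function.Injective (σ Q) ∧ ∀ i : Fin q, σ Q i ∈ Q) :
    IsAbsorber q
      (L.map ((Function.Embedding.inl : V ↪ NewV q V).trans
        (Function.Embedding.inl : NewV q V ↪ NewV q V ⊕ (Finset V × W))))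
      (gluedAbsorber q L A B (⇑ρ) σ (𝒬₁ ∪ 𝒬₂))
      ((fun v : V => (Sum.inl (Sum.inl v) : NewV q V ⊕ (Finset V × W))) '' VL) ∧
    rootedDensity2 (gluedAbsorber q L A B (⇑ρ) σ (𝒬₁ ∪ 𝒬₂))
        ((fun v : V => (Sum.inl (Sum.inl v) : NewV q V ⊕ (Finset V × W))) '' VL)
      ≤ max (((q : ℝ) + 1) / 2) (rootedDensity2 B (Set.range ρ)) :=
  nabla_construction_general q hq L A VL hAabs 𝒬₁ 𝒬₂ h1 h2 B ρ hB σ hσ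
end
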